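/- arXiv:0810.1342 — 10 statements merged into one kernel-verified Lean document; each statement's English description precedes it below -/
import Mathlib

section
/- Let m be a square-free positive integer with m ∉ {1,2,3,7,11}, and let 𝒪 be the ring of integers of ℚ(√-m). Then no element of 𝒪 has norm 2 and no element of 𝒪 has norm 3. -/
/-!
Every element of `ℤ[ω]` is `a + bω` with `a, b ∈ ℤ`, and `4 N(a + bω)` is `(2a + b)² + m b²` when
`m ≡ 3 (mod 4)` and `(2a)² + 4m b²` otherwise: a value of `x² + D y²` with `D ∈ {m, 4m}`.
Excluding `m ∈ {1, 2, 3, 7, 11}` forces `D = 0` or `D > 12`, so `x² + D y² ∈ {8, 12}` would make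
`y = 0` or `D = 0`, and neither `8` nor `12` is a square.
-/

open Complex Matrix

/-- ω for ℚ(√-m): √-m if m ≡ 1,2 (mod 4), (1+√-m)/2 if m ≡ 3 (mod 4). -/
noncomputable def omg (m : ℕ) : ℂ :=
  if m % 4 = 3 then (1 + Real.sqrt m * Complex.I) / 2 else Real.sqrt m * Complex.I

/-- The ring of integers 𝒪 = ℤ[ω] of ℚ(√-m), as a subring of ℂ. -/
noncomputable def ringO (m : ℕ) : Subalgebra ℤ ℂ := Algebra.adjoin ℤ {omg m}

theorem Algebra.exists_eq_intCast_add_mul_of_mem_adjoin {A : Type*} [CommRing A] {w : A}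
    {e k : ℤ} (hw : w ^ 2 = e * w - k) {z : A} (hz : z ∈ Algebra.adjoin ℤ {w}) :
    ∃ a b : ℤ, z = a + b * w := by
  induction hz using Algebra.adjoin_induction with
  | mem x hx => exact ⟨0, 1, by simp [Set.mem_singleton_iff.mp hx]⟩
  | algebraMap r => exact ⟨r, 0, by simp⟩
  | add x y _ _ hx hy =>
    obtain ⟨a, b, rfl⟩ := hx
    obtain ⟨c, d, rfl⟩ := hy
    exact ⟨a + c, b + d, by push_cast; ring⟩
  | mul x y _ _ hx hy =>
    obtain ⟨a, b, rfl⟩ := hx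
    obtain ⟨c, d, rfl⟩ := hy
    exact ⟨a * c - b * d * k, a * d + b * c + b * d * e, by push_cast; linear_combination b * d * hw⟩

theorem Int.sq_add_mul_sq_ne_of_not_isSquare {D : ℕ} {c : ℤ} (hc : ¬IsSquare c)
    (hD : D = 0 ∨ c < D) (x y : ℤ) : x ^ 2 + D * y ^ 2 ≠ c := by
  intro h
  by_cases hy : D = 0 ∨ y = 0
  · exact hc ⟨x, by rcases hy with hy | hy <;> simp [hy, ← h, sq]⟩
  · push Not at hy
    have hy2 : 1 ≤ y ^ 2 := by nlinarith [sq_pos_of_ne_zero hy.2]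
    have hDc : c < D := hD.resolve_left hy.1
    nlinarith [sq_nonneg x]

lemma ofReal_sqrt_natCast_sq (m : ℕ) : ((Real.sqrt m : ℝ) : ℂ) ^ 2 = m := by
  rw [← ofReal_pow, Real.sq_sqrt (Nat.cast_nonneg m), ofReal_natCast]

lemma omg_sq (m : ℕ) : ∃ e k : ℤ, omg m ^ 2 = e * omg m - k := by
  have hs := ofReal_sqrt_natCast_sq m
  by_cases h : m % 4 = 3
  · obtain ⟨j, hj⟩ : ∃ j : ℕ, m = 4 * j + 3 := ⟨m / 4, by omega⟩
    have hm : (m : ℂ) = 4 * j + 3 := by rw [hj]; push_cast; ring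
    refine ⟨1, j + 1, ?_⟩
    simp only [omg, if_pos h]
    push_cast
    linear_combination (-1 / 4 : ℂ) * hs - hm / 4 + ((Real.sqrt m : ℂ) ^ 2 / 4) * I_sq
  · refine ⟨0, m, ?_⟩
    simp only [omg, if_neg h]
    push_cast
    linear_combination I ^ 2 * hs + (m : ℂ) * I_sq

/-- `|disc ℚ(√-m)|` when `m` is squarefree. -/
def absDisc (m : ℕ) : ℕ := if m % 4 = 3 then m else 4 * m

lemma four_mul_add_mul_omg_mul_conj (m : ℕ) (a b : ℤ) :
    ∃ x y : ℤ, 4 * ((a + b * omg m) * starRingEnd ℂ (a + b * omg m)) =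
      ((x ^ 2 + absDisc m * y ^ 2 : ℤ) : ℂ) := by
  have hs := ofReal_sqrt_natCast_sq m
  by_cases h : m % 4 = 3
  · refine ⟨2 * a + b, b, ?_⟩
    simp only [omg, absDisc, if_pos h, map_add, map_mul, map_div₀, map_one, map_ofNat,
      map_intCast, conj_ofReal, conj_I]
    push_cast
    linear_combination (b : ℂ) ^ 2 * hs - (b : ℂ) ^ 2 * (Real.sqrt m : ℂ) ^ 2 * I_sq
  · refine ⟨2 * a, b, ?_⟩
    simp only [omg, absDisc, if_neg h, map_add, map_mul, map_intCast, conj_ofReal, conj_I]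
    push_cast
    linear_combination 4 * (b : ℂ) ^ 2 * hs - 4 * (b : ℂ) ^ 2 * (Real.sqrt m : ℂ) ^ 2 * I_sq

lemma mul_conj_ne_of_mem_ringO {m : ℕ} {z : ℂ} (hz : z ∈ ringO m) {N : ℤ}
    (hN : ¬IsSquare (4 * N)) (hD : absDisc m = 0 ∨ 4 * N < absDisc m) :
    z * starRingEnd ℂ z ≠ N := by
  obtain ⟨e, k, hω⟩ := omg_sq m
  obtain ⟨a, b, rfl⟩ := Algebra.exists_eq_intCast_add_mul_of_mem_adjoin hω hz
  obtain ⟨x, y, hxy⟩ := four_mul_add_mul_omg_mul_conj m a b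
  intro hzN
  refine Int.sq_add_mul_sq_ne_of_not_isSquare hN hD x y ?_
  rw [hzN] at hxy
  exact_mod_cast hxy.symm

theorem no_norm_two_or_three_general (m : ℕ)
    (hne : m ∉ ({1, 2, 3, 7, 11} : Set ℕ)) (z : ℂ) (hz : z ∈ ringO m) :
    z * (starRingEnd ℂ) z ≠ 2 ∧ z * (starRingEnd ℂ) z ≠ 3 := by
  simp only [Set.mem_insert_iff, Set.mem_singleton_iff, not_or] at hne
  have hD : absDisc m = 0 ∨ 12 < absDisc m := by
    unfold absDisc
    split_ifs <;> omega
  constructor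
  · exact_mod_cast mul_conj_ne_of_mem_ringO hz (N := 2) (by norm_num) (by push_cast; omega)
  · exact_mod_cast mul_conj_ne_of_mem_ringO hz (N := 3) (by norm_num) (by push_cast; omega)

theorem no_norm_two_or_three (m : ℕ) (hm : 0 < m) (hsf : Squarefree m)
    (hne : m ∉ ({1, 2, 3, 7, 11} : Set ℕ)) (z : ℂ) (hz : z ∈ ringO m) :
    z * (starRingEnd ℂ) z ≠ 2 ∧ z * (starRingEnd ℂ) z ≠ 3 :=
  no_norm_two_or_three_general m hne z hz
end

section
/- Over the Gaussian integers ℤ[i], there do not exist a, b, c, d ∈ ℤ[i] with aā + bb̄ = 2, cc̄ + dd̄ = 2, and ac̄ + bd̄ = 1. Equivalently, the binary Hermitian form with Gram matrix [[2,1],[1,2]] is not represented by the Hermitian form ⟨1,1⟩ over ℤ[i]. -/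
open Complex Matrix

/-!
The determinant `δ = ad - bc` of the matrix `[[a, b], [c, d]]` would be a Gaussian integer with
`δ δ̄ = det [[2, 1], [1, 2]] = 3`, by the Lagrange identity `|δ|² = (|a|²+|b|²)(|c|²+|d|²) - |ac̄+bd̄|²`
(equivalently, multiplicativity of the determinant of `X Xᴴ`). But a sum of two integer squares is
never `3`, as squares are `0` or `1` mod `4`.
-/

theorem Int.sq_add_sq_ne_three (x y : ℤ) : x ^ 2 + y ^ 2 ≠ 3 := by
  have hmod4 : ∀ u v : ZMod 4, u ^ 2 + v ^ 2 ≠ 3 := by decide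
  intro h
  exact hmod4 x y (by exact_mod_cast congrArg (Int.cast : ℤ → ZMod 4) h)

theorem lagrange_identity_star {R : Type*} [CommRing R] [StarRing R] (a b c d : R) :
    (a * d - b * c) * star (a * d - b * c) =
      (a * star a + b * star b) * (c * star c + d * star d) -
        (a * star c + b * star d) * star (a * star c + b * star d) := by
  simp only [star_sub, star_add, star_mul, star_star]
  ring

theorem omg_one : omg 1 = I := by
  simp [omg]

theorem exists_int_eq_of_mem_ringO_one {z : ℂ} (hz : z ∈ ringO 1) :
    ∃ x y : ℤ, z = x + y * I := by
  rw [ringO, omg_one] at hz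
  induction hz using Algebra.adjoin_induction with
  | mem w hw =>
    rw [Set.mem_singleton_iff.mp hw]
    exact ⟨0, 1, by simp⟩
  | algebraMap r => exact ⟨r, 0, by simp⟩
  | add u v _ _ ihu ihv =>
    obtain ⟨x₁, y₁, rfl⟩ := ihu
    obtain ⟨x₂, y₂, rfl⟩ := ihv
    exact ⟨x₁ + x₂, y₁ + y₂, by push_cast; ring⟩
  | mul u v _ _ ihu ihv =>
    obtain ⟨x₁, y₁, rfl⟩ := ihu
    obtain ⟨x₂, y₂, rfl⟩ := ihv
    refine ⟨x₁ * x₂ - y₁ * y₂, x₁ * y₂ + y₁ * x₂, ?_⟩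
    push_cast
    linear_combination (y₁ * y₂ : ℂ) * I_sq

theorem mul_conj_ne_three_of_mem_ringO_one {z : ℂ} (hz : z ∈ ringO 1) : z * starRingEnd ℂ z ≠ 3 := by
  obtain ⟨x, y, rfl⟩ := exists_int_eq_of_mem_ringO_one hz
  have h := Int.sq_add_sq_ne_three x y
  rw [mul_conj, ← ofReal_intCast, ← ofReal_intCast, normSq_add_mul_I]
  exact_mod_cast h

theorem gram_2112_not_represented_by_diag11 :
    (¬∃ a b c d : ℂ, a ∈ ringO 1 ∧ b ∈ ringO 1 ∧ c ∈ ringO 1 ∧ d ∈ ringO 1 ∧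
      a * (starRingEnd ℂ) a + b * (starRingEnd ℂ) b = 2 ∧
      c * (starRingEnd ℂ) c + d * (starRingEnd ℂ) d = 2 ∧
      a * (starRingEnd ℂ) c + b * (starRingEnd ℂ) d = 1) ∧
    (¬∃ X : Matrix (Fin 2) (Fin 2) ℂ, (∀ i j, X i j ∈ ringO 1) ∧
      !![(2 : ℂ), 1; 1, 2] = X * Xᴴ) := by
  constructor
  · rintro ⟨a, b, c, d, ha, hb, hc, hd, hab, hcd, hac⟩
    apply mul_conj_ne_three_of_mem_ringO_one (sub_mem (mul_mem ha hd) (mul_mem hb hc))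
    simp only [starRingEnd_apply] at hab hcd hac ⊢
    rw [lagrange_identity_star, hab, hcd, hac, star_one]
    norm_num
  · rintro ⟨X, hX, hgram⟩
    have hdet : X.det ∈ ringO 1 := by
      rw [det_fin_two]
      exact sub_mem (mul_mem (hX 0 0) (hX 1 1)) (mul_mem (hX 0 1) (hX 1 0))
    apply mul_conj_ne_three_of_mem_ringO_one hdet
    have := congrArg det hgram
    rw [det_mul, det_conjTranspose, det_fin_two_of] at this
    rw [starRingEnd_apply, ← this]
    norm_num
end

section
/- For any square-free positive integer m, the escalation of the binary Hermitian lattice ⟨1,1⟩ over the ring of integers 𝒪 of ℚ(√-m) has truant 2; that is, every binary Hermitian 𝒪-lattice ℓ with S(ℓ) = 1 is represented by ⟨1,1⟩, but there exists a binary Hermitian 𝒪-lattice ℓ with S(ℓ) = 2 not represented by ⟨1,1⟩. -/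
open Complex Matrix
open scoped ComplexOrder

/-!
Inner products of vectors of an `𝒪`-lattice have integral norms, so by Cauchy–Schwarz two
vectors of norm `1` are either orthogonal or differ by a unit of `𝒪`. Vectors of norms `0` and `1`
spanning a lattice of rank at most `2` therefore lie on at most two orthogonal lines, each spanned
by one of them, and their Gram matrix is represented by `⟨1,1⟩`. This gives the first half, and
also `S(ℓ) ≥ 2` for every `ℓ` not represented by `⟨1,1⟩`.

For `m = 3`, a representation `⟨1,2⟩ = X Xᴴ` would give `det X ∈ 𝒪` of norm `2`, but
`a² + ab + b² = 2` has no integral solution. For `m ≠ 3`, a representation of `[[2,1],[1,2]]` by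
rows `x, y ∈ 𝒪²` forces all four coordinates to be units, so `⟨x, y⟩ = 1` is a sum of two units;
both then have real part `1/2`, i.e. are primitive sixth roots of unity, which lie in `𝒪` only for
`m = 3`.
-/

open scoped ComplexConjugate InnerProductSpace

lemma exists_omg_add_conj_and_omg_mul_conj (m : ℕ) :
    ∃ t n : ℤ, omg m + conj (omg m) = t ∧ omg m * conj (omg m) = n := by
  have hs : ((Real.sqrt m : ℝ) : ℂ) ^ 2 = m := by
    rw [← Complex.ofReal_pow, Real.sq_sqrt m.cast_nonneg, Complex.ofReal_natCast]
  by_cases h : m % 4 = 3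
  · have hdvd : (4 : ℤ) ∣ m + 1 := by omega
    refine ⟨1, (m + 1) / 4, ?_, ?_⟩
    · simp only [omg, h, if_true, map_div₀, map_add, map_one, map_mul, conj_ofReal, conj_I,
        map_ofNat]
      push_cast
      ring
    · simp only [omg, h, if_true, map_div₀, map_add, map_one, map_mul, conj_ofReal, conj_I,
        map_ofNat]
      rw [Int.cast_div hdvd (by norm_num)]
      push_cast
      linear_combination (1 / 4 : ℂ) * hs - ((Real.sqrt m : ℂ) ^ 2 / 4) * I_sq
  · refine ⟨0, m, ?_, ?_⟩
    · simp only [omg, h, if_false, map_mul, conj_ofReal, conj_I]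
      push_cast
      ring
    · simp only [omg, h, if_false, map_mul, conj_ofReal, conj_I]
      push_cast
      linear_combination hs - ((Real.sqrt m : ℂ) ^ 2) * I_sq

lemma mem_ringO_iff {m : ℕ} {z : ℂ} :
    z ∈ ringO m ↔ ∃ a b : ℤ, z = a + b * omg m := by
  obtain ⟨t, n, ht, hn⟩ := exists_omg_add_conj_and_omg_mul_conj m
  have hsq : omg m ^ 2 = t * omg m - n := by
    rw [← ht, ← hn]
    ring
  constructor
  · intro hz
    induction hz using Algebra.adjoin_induction with
    | mem x hx => exact ⟨0, 1, by simp [Set.mem_singleton_iff.mp hx]⟩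
    | algebraMap r => exact ⟨r, 0, by simp⟩
    | add x y _ _ hx hy =>
      obtain ⟨a, b, rfl⟩ := hx
      obtain ⟨c, d, rfl⟩ := hy
      exact ⟨a + c, b + d, by push_cast; ring⟩
    | mul x y _ _ hx hy =>
      obtain ⟨a, b, rfl⟩ := hx
      obtain ⟨c, d, rfl⟩ := hy
      exact ⟨a * c - b * d * n, a * d + b * c + b * d * t, by
        push_cast; linear_combination (b * d : ℂ) * hsq⟩
  · rintro ⟨a, b, rfl⟩
    have hω : omg m ∈ ringO m := Algebra.subset_adjoin rfl
    exact add_mem (intCast_mem _ a) (mul_mem (intCast_mem _ b) hω)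

lemma conj_mem_ringO {m : ℕ} {z : ℂ} (hz : z ∈ ringO m) : conj z ∈ ringO m := by
  obtain ⟨t, -, ht, -⟩ := exists_omg_add_conj_and_omg_mul_conj m
  obtain ⟨a, b, rfl⟩ := mem_ringO_iff.mp hz
  refine mem_ringO_iff.mpr ⟨a + b * t, -b, ?_⟩
  simp only [map_add, map_mul, map_intCast]
  push_cast
  linear_combination (b : ℂ) * ht

lemma exists_normSq_eq_natCast {m : ℕ} {z : ℂ} (hz : z ∈ ringO m) : ∃ k : ℕ, normSq z = k := by
  obtain ⟨t, n, ht, hn⟩ := exists_omg_add_conj_and_omg_mul_conj m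
  obtain ⟨a, b, rfl⟩ := mem_ringO_iff.mp hz
  have hint : (normSq (a + b * omg m) : ℂ) = ((a ^ 2 + a * b * t + b ^ 2 * n : ℤ) : ℂ) := by
    rw [← mul_conj]
    simp only [map_add, map_mul, map_intCast]
    push_cast
    linear_combination (a * b : ℂ) * ht + (b ^ 2 : ℂ) * hn
  have hint' : normSq (a + b * omg m) = ((a ^ 2 + a * b * t + b ^ 2 * n : ℤ) : ℝ) := by
    exact_mod_cast hint
  refine ⟨(a ^ 2 + a * b * t + b ^ 2 * n).toNat, ?_⟩
  rw [hint', ← Int.cast_natCast, Int.toNat_of_nonneg]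
  exact_mod_cast hint' ▸ normSq_nonneg _

lemma exists_intCast_eq_of_im_eq_zero {m : ℕ} {z : ℂ} (hz : z ∈ ringO m) (him : z.im = 0) :
    ∃ a : ℤ, z = a := by
  obtain ⟨a, b, rfl⟩ := mem_ringO_iff.mp hz
  refine ⟨a, ?_⟩
  by_cases h : m % 4 = 3
  · have hb : b = 0 := by
      simp [omg, h] at him
      omega
    simp [hb]
  · apply Complex.ext <;> simp_all [omg]

lemma exists_four_mul_im_sq_eq {m : ℕ} {z : ℂ} (hz : z ∈ ringO m) :
    ∃ b : ℤ, 4 * z.im ^ 2 = b ^ 2 * m := by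
  obtain ⟨a, b, rfl⟩ := mem_ringO_iff.mp hz
  have hs : Real.sqrt m ^ 2 = m := Real.sq_sqrt m.cast_nonneg
  by_cases h : m % 4 = 3
  · exact ⟨b, by simp [omg, h]; linear_combination (b : ℝ) ^ 2 * hs⟩
  · exact ⟨2 * b, by simp [omg, h]; linear_combination 4 * (b : ℝ) ^ 2 * hs⟩

lemma eq_three_of_add_eq_one {m : ℕ} {u v : ℂ} (hu : u ∈ ringO m) (huv : u + v = 1)
    (hnu : normSq u = 1) (hnv : normSq v = 1) : m = 3 := by
  obtain ⟨b, hb⟩ := exists_four_mul_im_sq_eq hu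
  obtain rfl : v = 1 - u := eq_sub_of_add_eq' huv
  -- `|u| = |1 - u| = 1` forces `re u = 1/2`, hence `4 (im u)² = 3`
  rw [normSq_apply] at hnu hnv
  simp only [sub_re, one_re, sub_im, one_im] at hnv
  have h3 : b ^ 2 * (m : ℤ) = 3 := by
    have : (b ^ 2 * m : ℝ) = 3 := by nlinarith
    exact_mod_cast this
  have hm : (1 : ℤ) ≤ m := by
    rcases Nat.eq_zero_or_pos m with rfl | hm
    · simp at h3
    · exact_mod_cast hm
  have hb1 : -1 ≤ b ∧ b ≤ 1 := by constructor <;> nlinarith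
  obtain ⟨hb₁, hb₂⟩ := hb1
  interval_cases b <;> omega

lemma normSq_ne_two_of_mem_ringO_three {z : ℂ} (hz : z ∈ ringO 3) : normSq z ≠ 2 := by
  obtain ⟨a, b, rfl⟩ := mem_ringO_iff.mp hz
  have hs : Real.sqrt 3 ^ 2 = 3 := Real.sq_sqrt (by norm_num)
  intro h
  have h8 : (2 * a + b) ^ 2 + 3 * b ^ 2 = 8 := by
    have : ((2 * a + b) ^ 2 + 3 * b ^ 2 : ℝ) = 8 := by
      simp [omg, normSq_apply] at h
      nlinarith
    exact_mod_cast this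
  have hb : -1 ≤ b ∧ b ≤ 1 := by constructor <;> nlinarith
  have ha : -2 ≤ a ∧ a ≤ 2 := by constructor <;> nlinarith
  obtain ⟨hb₁, hb₂⟩ := hb
  obtain ⟨ha₁, ha₂⟩ := ha
  interval_cases a <;> interval_cases b <;> omega

lemma eq_three_of_normSq_add_normSq_eq_two {m : ℕ} {α β γ δ : ℂ} (hα : α ∈ ringO m)
    (hβ : β ∈ ringO m) (hγ : γ ∈ ringO m) (hδ : δ ∈ ringO m) (hx : normSq α + normSq β = 2)
    (hy : normSq γ + normSq δ = 2) (hxy : α * conj γ + β * conj δ = 1) : m = 3 := by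
  obtain ⟨a, ha⟩ := exists_normSq_eq_natCast hα
  obtain ⟨b, hb⟩ := exists_normSq_eq_natCast hβ
  obtain ⟨c, hc⟩ := exists_normSq_eq_natCast hγ
  obtain ⟨d, hd⟩ := exists_normSq_eq_natCast hδ
  have hab : a + b = 2 := by rw [ha, hb] at hx; exact_mod_cast hx
  have hcd : c + d = 2 := by rw [hc, hd] at hy; exact_mod_cast hy
  have hu : normSq (α * conj γ) = (a * c : ℕ) := by
    rw [normSq_mul, normSq_conj, ha, hc, Nat.cast_mul]
  have hv : normSq (β * conj δ) = (b * d : ℕ) := by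
    rw [normSq_mul, normSq_conj, hb, hd, Nat.cast_mul]
  have hone : ∀ {u v : ℂ} {p q : ℕ}, u + v = 1 → normSq u = p → normSq v = q → p = 0 → q = 1 := by
    intro u v p q huv hp hq h0
    rw [h0, Nat.cast_zero, normSq_eq_zero] at hp
    rw [hp, zero_add] at huv
    exact_mod_cast hq.symm.trans (huv ▸ normSq_one)
  have hac : a * c ≠ 0 := fun h ↦ by
    obtain ⟨rfl, rfl⟩ := mul_eq_one.mp (hone hxy hu hv h)
    obtain rfl : a = 1 := by omega
    obtain rfl : c = 1 := by omega
    simp at h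
  have hbd : b * d ≠ 0 := fun h ↦ by
    obtain ⟨rfl, rfl⟩ := mul_eq_one.mp (hone ((add_comm _ _).trans hxy) hv hu h)
    obtain rfl : b = 1 := by omega
    obtain rfl : d = 1 := by omega
    simp at h
  simp only [mul_ne_zero_iff] at hac hbd
  obtain ⟨rfl, rfl, rfl, rfl⟩ : a = 1 ∧ b = 1 ∧ c = 1 ∧ d = 1 := by omega
  exact eq_three_of_add_eq_one (mul_mem hα (conj_mem_ringO hγ)) hxy (by simpa using hu)
    (by simpa using hv)

section InnerProductSpace

variable {E : Type*} [NormedAddCommGroup E] [InnerProductSpace ℂ E]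

lemma inner_eq_zero_or_eq_inner_smul {x y : E} (hx : ‖x‖ = 1) (hy : ‖y‖ = 1)
    (hint : ∃ k : ℕ, ‖⟪x, y⟫_ℂ‖ ^ 2 = k) : ⟪x, y⟫_ℂ = 0 ∨ y = ⟪x, y⟫_ℂ • x := by
  obtain ⟨k, hk⟩ := hint
  have hle : ‖⟪x, y⟫_ℂ‖ ≤ 1 := by simpa [hx, hy] using norm_inner_le_norm (𝕜 := ℂ) x y
  have hk1 : k ≤ 1 := by
    have : (k : ℝ) ≤ 1 := hk ▸ pow_le_one₀ (norm_nonneg _) hle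
    exact_mod_cast this
  interval_cases k
  · left
    simpa using hk
  · right
    have hnorm : ‖⟪x, y⟫_ℂ‖ = ‖x‖ * ‖y‖ := by
      rw [hx, hy, one_mul]
      exact (pow_eq_one_iff_of_nonneg (norm_nonneg _) two_ne_zero).mp (by simpa using hk)
    obtain ⟨r, -, rfl⟩ := (norm_inner_eq_norm_iff (norm_ne_zero_iff.mp (by simp [hx]))
      (norm_ne_zero_iff.mp (by simp [hy]))).mp hnorm
    rw [inner_smul_right, inner_self_eq_norm_sq_to_K, hx]
    simp

lemma orthonormal_insert {ι : Type*} [DecidableEq ι] {v : ι → E} {s : Finset ι} {i : ι}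
    (hs : Orthonormal ℂ fun t : s ↦ v t) (hi : ‖v i‖ = 1) (horth : ∀ t ∈ s, ⟪v t, v i⟫_ℂ = 0) :
    Orthonormal ℂ fun t : (insert i s : Finset ι) ↦ v t := by
  have hmem : ∀ t : (insert i s : Finset ι), (t : ι) = i ∨ (t : ι) ∈ s :=
    fun t ↦ Finset.mem_insert.mp t.2
  refine ⟨fun t ↦ ?_, fun a b hab ↦ ?_⟩
  · rcases hmem t with ht | ht
    · simpa [ht] using hi
    · exact hs.1 ⟨t, ht⟩
  · show ⟪v a, v b⟫_ℂ = 0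
    have hab' : (a : ι) ≠ b := fun h ↦ hab (Subtype.ext h)
    rcases hmem a with ha | ha <;> rcases hmem b with hb | hb
    · exact absurd (ha.trans hb.symm) hab'
    · rw [ha, ← inner_conj_symm, horth b hb, map_zero]
    · rw [hb, horth a ha]
    · exact hs.inner_eq_zero (i := ⟨a, ha⟩) (j := ⟨b, hb⟩)
        fun h ↦ hab' (congrArg (Subtype.val : s → ι) h)

/-- Any maximal orthonormal subfamily works: a unit vector orthogonal to all its members could be
added to it, so it is parallel to one of them by `inner_eq_zero_or_eq_inner_smul`. -/
lemma exists_orthonormal_forall_eq_sum_inner_smul {ι : Type*} [Fintype ι] (v : ι → E)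
    (hv : ∀ i, v i = 0 ∨ ‖v i‖ = 1) (hint : ∀ i j, ∃ k : ℕ, ‖⟪v i, v j⟫_ℂ‖ ^ 2 = k) :
    ∃ s : Finset ι, (Orthonormal ℂ fun t : s ↦ v t) ∧
      ∀ i, v i = ∑ t : s, ⟪v t, v i⟫_ℂ • v t := by
  classical
  obtain ⟨s, hs, hmax⟩ := (Finset.univ.filter fun s : Finset ι ↦ Orthonormal ℂ fun t : s ↦ v t)
    |>.exists_max_image Finset.card ⟨∅, by simp [Orthonormal.of_isEmpty]⟩
  replace hs : Orthonormal ℂ fun t : s ↦ v t := (Finset.mem_filter.mp hs).2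
  refine ⟨s, hs, fun i ↦ ?_⟩
  rcases hv i with hi | hi
  · simp [hi]
  obtain ⟨t, ht, hti⟩ : ∃ t ∈ s, ⟪v t, v i⟫_ℂ ≠ 0 := by
    by_contra! horth
    have his : i ∉ s := fun his ↦ by simpa [hi] using horth i his
    have hcard := hmax (insert i s) (by simpa using orthonormal_insert hs hi horth)
    rw [Finset.card_insert_of_notMem his] at hcard
    omega
  have hpar : v i = ⟪v t, v i⟫_ℂ • v t :=
    (inner_eq_zero_or_eq_inner_smul (hs.1 ⟨t, ht⟩) hi (hint t i)).resolve_left hti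
  rw [Fintype.sum_eq_single ⟨t, ht⟩ fun t' ht' ↦ ?_]
  · exact hpar
  · rw [hpar, inner_smul_right, hs.inner_eq_zero ht', mul_zero, zero_smul]

lemma card_le_rank_gram {ι : Type*} [Fintype ι] {v : ι → E} {s : Finset ι}
    (hs : Orthonormal ℂ fun t : s ↦ v t) : s.card ≤ (gram ℂ v).rank := by
  classical
  have hsub : (gram ℂ v).submatrix (Subtype.val : s → ι) Subtype.val = 1 :=
    gram_eq_one_iff_orthonormal.mpr hs
  calc s.card = (1 : Matrix s s ℂ).rank := by simp
    _ ≤ (gram ℂ v).rank := hsub ▸ rank_submatrix_le _ _ _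

end InnerProductSpace

lemma Matrix.PosSemidef.exists_eq_gram {ι : Type*} [Fintype ι] [DecidableEq ι]
    {M : Matrix ι ι ℂ} (hM : M.PosSemidef) : ∃ v : ι → EuclideanSpace ℂ ι, M = gram ℂ v := by
  open scoped MatrixOrder in
  obtain ⟨B, rfl⟩ := CStarAlgebra.nonneg_iff_eq_star_mul_self.mp hM.nonneg
  refine ⟨fun i ↦ WithLp.toLp 2 fun l ↦ B l i, ?_⟩
  ext i j
  simp [mul_apply, PiLp.inner_apply, star_eq_conjTranspose, mul_comm]

section SubsemiringMatrix

variable {S : Type*} [SetLike S ℂ] [SubsemiringClass S ℂ] (R : S)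

lemma mul_apply_mem {l n o : Type*} [Fintype n] {A : Matrix l n ℂ} {B : Matrix n o ℂ}
    (hA : ∀ i j, A i j ∈ R) (hB : ∀ i j, B i j ∈ R) (i : l) (k : o) : (A * B) i k ∈ R :=
  sum_mem fun j _ ↦ mul_mem (hA i j) (hB j k)

lemma exists_fin_mul_conjTranspose_eq {ι κ : Type*} [Fintype κ] {d : ℕ} (Y : Matrix ι κ ℂ)
    (hY : ∀ i t, Y i t ∈ R) (hκ : Fintype.card κ ≤ d) :
    ∃ X : Matrix ι (Fin d) ℂ, (∀ i c, X i c ∈ R) ∧ Y * Yᴴ = X * Xᴴ := by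
  classical
  obtain ⟨e⟩ := Function.Embedding.nonempty_of_card_le (hκ.trans (Fintype.card_fin d).ge)
  set P : Matrix κ (Fin d) ℂ := (1 : Matrix (Fin d) (Fin d) ℂ).submatrix e id
  have hP : P * Pᴴ = 1 := by
    rw [conjTranspose_submatrix, conjTranspose_one, ← submatrix_mul _ _ _ _ _ Function.bijective_id,
      one_mul, submatrix_one_embedding]
  refine ⟨Y * P, mul_apply_mem R hY fun t c ↦ ?_, ?_⟩
  · simp only [P, submatrix_apply, id, one_apply]
    split_ifs
    exacts [one_mem R, zero_mem R]
  · rw [conjTranspose_mul, Matrix.mul_assoc, ← Matrix.mul_assoc P, hP, Matrix.one_mul]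

theorem exists_eq_mul_conjTranspose_of_diag_eq_zero_or_one (hR : ∀ z ∈ R, ∃ k : ℕ, normSq z = k)
    {ι : Type*} [Fintype ι] [DecidableEq ι] {d : ℕ} {M : Matrix ι ι ℂ} (hmem : ∀ i j, M i j ∈ R)
    (hM : M.PosSemidef) (hrk : M.rank ≤ d) (hdiag : ∀ i, M i i = 0 ∨ M i i = 1) :
    ∃ X : Matrix ι (Fin d) ℂ, (∀ i c, X i c ∈ R) ∧ M = X * Xᴴ := by
  obtain ⟨v, rfl⟩ := hM.exists_eq_gram
  have hv : ∀ i, v i = 0 ∨ ‖v i‖ = 1 := fun i ↦ (hdiag i).imp (by simp) fun h ↦ by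
    refine (pow_eq_one_iff_of_nonneg (norm_nonneg _) two_ne_zero).mp ?_
    rw [← inner_self_eq_norm_sq (𝕜 := ℂ), ← gram_apply, h, RCLike.one_re]
  have hint : ∀ i j, ∃ k : ℕ, ‖⟪v i, v j⟫_ℂ‖ ^ 2 = k := fun i j ↦ by
    simpa [← normSq_eq_norm_sq] using hR _ (hmem i j)
  obtain ⟨s, hs, hspan⟩ := exists_orthonormal_forall_eq_sum_inner_smul v hv hint
  set Y := (gram ℂ v).submatrix id (Subtype.val : s → ι)
  have hgram : gram ℂ v = Y * Yᴴ := by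
    ext i j
    conv_lhs => rw [gram_apply, hspan j, inner_sum]
    simp [Y, mul_apply, inner_smul_right, mul_comm]
  obtain ⟨X, hX, hXX⟩ := exists_fin_mul_conjTranspose_eq R Y (fun i t ↦ hmem i t)
    ((Fintype.card_coe s).trans_le ((card_le_rank_gram hs).trans hrk))
  exact ⟨X, hX, hgram.trans hXX⟩

end SubsemiringMatrix

/-- The rows of `X` are the coordinates in `⟨1,1⟩ = 𝒪²` of vectors with Gram matrix `M`. -/
def IsRepresentedByDiagOneOne (m : ℕ) {ι : Type*} (M : Matrix ι ι ℂ) : Prop :=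
  ∃ X : Matrix ι (Fin 2) ℂ, (∀ i j, X i j ∈ ringO m) ∧ M = X * Xᴴ

lemma eq_zero_or_eq_one_of_mem_ringO {m : ℕ} {z : ℂ} (hz : z ∈ ringO m) (h0 : 0 ≤ z)
    (h2 : z.re < 2) : z = 0 ∨ z = 1 := by
  obtain ⟨a, rfl⟩ := exists_intCast_eq_of_im_eq_zero hz (nonneg_iff.mp h0).2.symm
  have ha0 : 0 ≤ a := by exact_mod_cast (nonneg_iff.mp h0).1
  have ha2 : a < 2 := by exact_mod_cast h2
  interval_cases a <;> simp

/-- `S(ℓ) ≥ 2` when `ℓ` is not represented by `⟨1,1⟩`: a generating set of norms below `2` has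
norms `0` and `1`, and is then represented. -/
theorem exists_two_le_re_diag_of_not_isRepresentedByDiagOneOne {m : ℕ} {ι κ : Type*} [Fintype ι]
    [Fintype κ] [DecidableEq κ] {M : Matrix ι ι ℂ} (hM : M.PosSemidef) (hrk : M.rank ≤ 2)
    (hnot : ¬IsRepresentedByDiagOneOne m M) {M' : Matrix κ κ ℂ} (hmem' : ∀ i j, M' i j ∈ ringO m)
    {Y : Matrix κ ι ℂ} {Z : Matrix ι κ ℂ} (hZ : ∀ i j, Z i j ∈ ringO m) (hM' : M' = Y * M * Yᴴ)
    (hMZ : M = Z * M' * Zᴴ) : ∃ i, 2 ≤ (M' i i).re := by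
  by_contra! hlt
  have hM'psd : M'.PosSemidef := hM' ▸ hM.mul_mul_conjTranspose_same Y
  have hrk' : M'.rank ≤ 2 :=
    hM' ▸ (rank_mul_le_left _ _).trans ((rank_mul_le_right _ _).trans hrk)
  obtain ⟨X, hX, rfl⟩ := exists_eq_mul_conjTranspose_of_diag_eq_zero_or_one (ringO m)
    (fun _ ↦ exists_normSq_eq_natCast) hmem' hM'psd hrk'
    fun i ↦ eq_zero_or_eq_one_of_mem_ringO (hmem' i i) hM'psd.diag_nonneg (hlt i)
  refine hnot ⟨Z * X, mul_apply_mem _ hZ hX, ?_⟩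
  rw [hMZ, conjTranspose_mul]
  simp only [Matrix.mul_assoc]

lemma not_isRepresentedByDiagOneOne_one_two :
    ¬IsRepresentedByDiagOneOne 3 !![(1 : ℂ), 0; 0, 2] := by
  rintro ⟨X, hX, hXX⟩
  have hdet : X.det ∈ ringO 3 := by
    rw [det_fin_two]
    exact sub_mem (mul_mem (hX 0 0) (hX 1 1)) (mul_mem (hX 0 1) (hX 1 0))
  refine normSq_ne_two_of_mem_ringO_three hdet ?_
  have h := congrArg det hXX
  rw [det_mul, det_conjTranspose, star_def, mul_conj, det_fin_two_of] at h
  have h' : ((normSq X.det : ℝ) : ℂ) = 2 := by simpa using h.symm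
  exact_mod_cast h'

lemma not_isRepresentedByDiagOneOne_two_one_one_two {m : ℕ} (hm3 : m ≠ 3) :
    ¬IsRepresentedByDiagOneOne m !![(2 : ℂ), 1; 1, 2] := by
  rintro ⟨X, hX, hXX⟩
  have hentry : ∀ i j, !![(2 : ℂ), 1; 1, 2] i j = X i 0 * conj (X j 0) + X i 1 * conj (X j 1) :=
    fun i j ↦ by rw [hXX]; simp [mul_apply, Fin.sum_univ_two]
  refine hm3 (eq_three_of_normSq_add_normSq_eq_two (hX 0 0) (hX 0 1) (hX 1 0) (hX 1 1) ?_ ?_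
    (by simpa using (hentry 0 1).symm))
  · have h : ((normSq (X 0 0) + normSq (X 0 1) : ℝ) : ℂ) = 2 := by
      simpa [mul_conj] using (hentry 0 0).symm
    exact_mod_cast h
  · have h : ((normSq (X 1 0) + normSq (X 1 1) : ℝ) : ℂ) = 2 := by
      simpa [mul_conj] using (hentry 1 1).symm
    exact_mod_cast h

lemma posSemidef_one_two : (!![(1 : ℂ), 0; 0, 2]).PosSemidef := by
  have hdiag : !![(1 : ℂ), 0; 0, 2] = diagonal ![1, 2] := by
    ext i j; fin_cases i <;> fin_cases j <;> rfl
  rw [hdiag, posSemidef_diagonal_iff]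
  intro i; fin_cases i <;> norm_num

lemma posSemidef_two_one_one_two : (!![(2 : ℂ), 1; 1, 2]).PosSemidef := by
  have hsum : !![(2 : ℂ), 1; 1, 2] = 1 + vecMulVec ![1, 1] (star ![1, 1]) := by
    ext i j; fin_cases i <;> fin_cases j <;> norm_num [vecMulVec]
  rw [hsum]
  exact PosSemidef.one.add (posSemidef_vecMulVec_self_star _)

theorem truant_of_diag11_is_two_general (m : ℕ) :
    -- every binary lattice admitting a generating set of vectors of norm 1 (S(ℓ) = 1)
    -- is represented by ⟨1,1⟩
    (∀ (n : ℕ) (M : Matrix (Fin n) (Fin n) ℂ),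
      (∀ i j, M i j ∈ ringO m) → M.PosSemidef → M.rank = 2 →
      (∀ i, M i i = 1) →
      ∃ X : Matrix (Fin n) (Fin 2) ℂ, (∀ i j, X i j ∈ ringO m) ∧ M = X * Xᴴ) ∧
    -- and there is a binary lattice with S(ℓ) = 2 not represented by ⟨1,1⟩
    (∃ (n : ℕ) (M : Matrix (Fin n) (Fin n) ℂ),
      (∀ i j, M i j ∈ ringO m) ∧ M.PosSemidef ∧ M.rank = 2 ∧
      -- this generating set has all norms at most 2, so S(ℓ) ≤ 2
      (∀ i, (M i i).re ≤ 2) ∧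
      -- every generating set of an isometric copy contains a vector of norm at least 2,
      -- so S(ℓ) ≥ 2
      (∀ (k : ℕ) (M' : Matrix (Fin k) (Fin k) ℂ),
        (∀ i j, M' i j ∈ ringO m) →
        (∃ (Y : Matrix (Fin k) (Fin n) ℂ) (Z : Matrix (Fin n) (Fin k) ℂ),
          (∀ i j, Y i j ∈ ringO m) ∧ (∀ i j, Z i j ∈ ringO m) ∧
          M' = Y * M * Yᴴ ∧ M = Z * M' * Zᴴ) →
        ∃ i, 2 ≤ (M' i i).re) ∧
      ¬∃ X : Matrix (Fin n) (Fin 2) ℂ, (∀ i j, X i j ∈ ringO m) ∧ M = X * Xᴴ) := by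
  refine ⟨fun n M hmem hM hrk hdiag ↦ exists_eq_mul_conjTranspose_of_diag_eq_zero_or_one (ringO m)
    (fun _ ↦ exists_normSq_eq_natCast) hmem hM hrk.le fun i ↦ Or.inr (hdiag i), ?_⟩
  obtain ⟨M, hmem, hM, hdet, hdiag, hnot⟩ : ∃ M : Matrix (Fin 2) (Fin 2) ℂ,
      (∀ i j, M i j ∈ ringO m) ∧ M.PosSemidef ∧ M.det ≠ 0 ∧ (∀ i, (M i i).re ≤ 2) ∧
        ¬IsRepresentedByDiagOneOne m M := by
    by_cases hm3 : m = 3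
    · subst hm3
      exact ⟨!![1, 0; 0, 2], by simp [Fin.forall_fin_two, ofNat_mem], posSemidef_one_two,
        by simp [det_fin_two_of], by simp [Fin.forall_fin_two],
        not_isRepresentedByDiagOneOne_one_two⟩
    · exact ⟨!![2, 1; 1, 2], by simp [Fin.forall_fin_two, ofNat_mem], posSemidef_two_one_one_two,
        by norm_num [det_fin_two_of], by simp [Fin.forall_fin_two],
        not_isRepresentedByDiagOneOne_two_one_one_two hm3⟩
  have hrk : M.rank = 2 := by
    rw [rank_of_isUnit M ((isUnit_iff_isUnit_det M).mpr hdet.isUnit), Fintype.card_fin]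
  exact ⟨2, M, hmem, hM, hrk, hdiag, fun k M' hmem' ⟨Y, Z, _, hZ, hM', hMZ⟩ ↦
    exists_two_le_re_diag_of_not_isRepresentedByDiagOneOne hM hrk.le hnot hmem' hZ hM' hMZ, hnot⟩

/-- The truant of ⟨1,1⟩ is 2:  every binary Hermitian 𝒪-lattice (given by the formal
Gram matrix of a generating set) with S(ℓ) = 1 is represented by ⟨1,1⟩, while some
binary Hermitian 𝒪-lattice with S(ℓ) = 2 is not represented by ⟨1,1⟩. -/
theorem truant_of_diag11_is_two (m : ℕ) (hm : 0 < m) (hsf : Squarefree m) :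
    -- every binary lattice admitting a generating set of vectors of norm 1 (S(ℓ) = 1)
    -- is represented by ⟨1,1⟩
    (∀ (n : ℕ) (M : Matrix (Fin n) (Fin n) ℂ),
      (∀ i j, M i j ∈ ringO m) → M.PosSemidef → M.rank = 2 →
      (∀ i, M i i = 1) →
      ∃ X : Matrix (Fin n) (Fin 2) ℂ, (∀ i j, X i j ∈ ringO m) ∧ M = X * Xᴴ) ∧
    -- and there is a binary lattice with S(ℓ) = 2 not represented by ⟨1,1⟩
    (∃ (n : ℕ) (M : Matrix (Fin n) (Fin n) ℂ),
      (∀ i j, M i j ∈ ringO m) ∧ M.PosSemidef ∧ M.rank = 2 ∧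
      -- this generating set has all norms at most 2, so S(ℓ) ≤ 2
      (∀ i, (M i i).re ≤ 2) ∧
      -- every generating set of an isometric copy contains a vector of norm at least 2,
      -- so S(ℓ) ≥ 2
      (∀ (k : ℕ) (M' : Matrix (Fin k) (Fin k) ℂ),
        (∀ i j, M' i j ∈ ringO m) →
        (∃ (Y : Matrix (Fin k) (Fin n) ℂ) (Z : Matrix (Fin n) (Fin k) ℂ),
          (∀ i j, Y i j ∈ ringO m) ∧ (∀ i j, Z i j ∈ ringO m) ∧
          M' = Y * M * Yᴴ ∧ M = Z * M' * Zᴴ) →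
        ∃ i, 2 ≤ (M' i i).re) ∧
      ¬∃ X : Matrix (Fin n) (Fin 2) ℂ, (∀ i j, X i j ∈ ringO m) ∧ M = X * Xᴴ) :=
  truant_of_diag11_is_two_general m
end

section
/- Let m ∉ {1,2,3,7,11} be a square-free positive integer and 𝒪 the ring of integers of ℚ(√-m). Then the binary Hermitian lattice ⟨1,3⟩ is not represented by ⟨1,1,1⟩ over 𝒪, and the binary Hermitian lattice ⟨3,3⟩ is not represented by ⟨1,1,2⟩ over 𝒪. -/
/-!
For `m` outside `{1, 2, 3, 7, 11}` an element `a + bω` of `𝒪` with `b ≠ 0` has norm at least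
`(Im ω)² ∈ {m, m/4} > 3`. The diagonal entries of both Gram matrices are at most `3` and dominate
the norms of the entries of `X`, so `X` has rational integer entries and the representation would
already hold over `ℤ`. There it fails: in `⟨1, 1, 1⟩` a vector `b` of norm `3` is `(±1, ±1, ±1)`,
so `a·b ≡ a·a (mod 2)`, which is odd when `a` has norm `1`; in `⟨1, 1, 2⟩` a vector of norm `3` is
`(u, ±1)` with `u` a unit vector of `ℤ²`, and two of them have product `u·u' ± 2 ≠ 0`.
-/

open Complex Matrix

theorem exists_int_eq_add_mul_of_mem_adjoin {w z : ℂ} {c d : ℤ} (hw : w ^ 2 = c + d * w)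
    (hz : z ∈ Algebra.adjoin ℤ {w}) : ∃ a b : ℤ, z = a + b * w := by
  induction hz using Algebra.adjoin_induction with
  | mem x hx => exact ⟨0, 1, by simp [Set.mem_singleton_iff.mp hx]⟩
  | algebraMap r => exact ⟨r, 0, by simp⟩
  | add x y _ _ ihx ihy =>
    obtain ⟨a, b, rfl⟩ := ihx
    obtain ⟨a', b', rfl⟩ := ihy
    exact ⟨a + a', b + b', by push_cast; ring⟩
  | mul x y _ _ ihx ihy =>
    obtain ⟨a, b, rfl⟩ := ihx
    obtain ⟨a', b', rfl⟩ := ihy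
    exact ⟨a * a' + b * b' * c, a * b' + b * a' + b * b' * d, by
      push_cast; linear_combination (b : ℂ) * b' * hw⟩

theorem omg_sq_eq (m : ℕ) : ∃ c d : ℤ, omg m ^ 2 = c + d * omg m := by
  have hsq : ((Real.sqrt m : ℂ) * I) ^ 2 = -m := by
    rw [mul_pow, ← ofReal_pow, Real.sq_sqrt m.cast_nonneg, I_sq]; push_cast; ring
  unfold omg
  split_ifs with h
  · refine ⟨-((m + 1) / 4 : ℕ), 1, ?_⟩
    have h4 : (((m + 1) / 4 : ℕ) : ℂ) * 4 = m + 1 := by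
      exact_mod_cast Nat.div_mul_cancel (by omega : 4 ∣ m + 1)
    simp only [Int.cast_neg, Int.cast_natCast, Int.cast_one]
    linear_combination hsq / 4 + h4 / 4
  · exact ⟨-m, 0, by push_cast; linear_combination hsq⟩

theorem three_lt_im_omg_sq {m : ℕ} (hm : 0 < m) (hne : m ∉ ({1, 2, 3, 7, 11} : Set ℕ)) :
    3 < (omg m).im ^ 2 := by
  simp only [Set.mem_insert_iff, Set.mem_singleton_iff, not_or] at hne
  have hsq : Real.sqrt m ^ 2 = m := Real.sq_sqrt m.cast_nonneg
  unfold omg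
  split_ifs with h
  · have : (15 : ℝ) ≤ m := by exact_mod_cast (by omega : 15 ≤ m)
    simp only [div_ofNat_im, add_im, one_im, mul_im, ofReal_re, I_im, ofReal_im, I_re]
    nlinarith
  · have : (4 : ℝ) ≤ m := by exact_mod_cast (by omega : 4 ≤ m)
    simp only [mul_im, ofReal_re, I_im, ofReal_im, I_re]
    nlinarith

theorem im_sq_le_normSq_intCast_add_intCast_mul (w : ℂ) (a : ℤ) {b : ℤ} (hb : b ≠ 0) :
    w.im ^ 2 ≤ normSq (a + b * w) := by
  have hb : (1 : ℝ) ≤ (b : ℝ) ^ 2 := by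
    exact_mod_cast (one_le_sq_iff_one_le_abs b).mpr (Int.one_le_abs hb)
  calc w.im ^ 2 ≤ (b : ℝ) ^ 2 * w.im ^ 2 := le_mul_of_one_le_left (sq_nonneg _) hb
    _ = (a + b * w : ℂ).im * (a + b * w : ℂ).im := by
      simp only [add_im, intCast_im, mul_im, intCast_re, zero_mul, add_zero, zero_add]; ring
    _ ≤ normSq (a + b * w) := Complex.im_sq_le_normSq _

theorem exists_intCast_eq_of_mem_ringO_of_normSq_le_three {m : ℕ} (hm : 0 < m)
    (hne : m ∉ ({1, 2, 3, 7, 11} : Set ℕ)) {z : ℂ} (hz : z ∈ ringO m) (h : normSq z ≤ 3) :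
    ∃ n : ℤ, (n : ℂ) = z := by
  obtain ⟨c, d, hcd⟩ := omg_sq_eq m
  obtain ⟨a, b, rfl⟩ := exists_int_eq_add_mul_of_mem_adjoin hcd hz
  rcases eq_or_ne b 0 with rfl | hb
  · exact ⟨a, by simp⟩
  · exact absurd ((three_lt_im_omg_sq hm hne).trans_le
      (im_sq_le_normSq_intCast_add_intCast_mul _ a hb)) h.not_gt

section Gram

variable {k n : Type*} [Fintype n] [DecidableEq n]

theorem mul_diagonal_mul_conjTranspose_apply_self (X : Matrix k n ℂ) (d : n → ℝ) (i : k) :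
    (X * diagonal (fun j ↦ (d j : ℂ)) * Xᴴ) i i = ((∑ j, d j * normSq (X i j) : ℝ) : ℂ) := by
  rw [mul_apply]
  simp only [mul_diagonal, conjTranspose_apply, RCLike.star_def]
  push_cast
  exact Finset.sum_congr rfl fun j _ ↦ by rw [mul_right_comm, mul_conj, mul_comm]

theorem normSq_le_of_mul_diagonal_mul_conjTranspose_apply_self_eq (X : Matrix k n ℂ)
    {d : n → ℝ} (hd : ∀ j, 1 ≤ d j) (i : k) (j : n) {c : ℝ}
    (h : (X * diagonal (fun j ↦ (d j : ℂ)) * Xᴴ) i i = c) : normSq (X i j) ≤ c := by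
  rw [mul_diagonal_mul_conjTranspose_apply_self, ofReal_inj] at h
  rw [← h]
  calc normSq (X i j) ≤ d j * normSq (X i j) := le_mul_of_one_le_left (normSq_nonneg _) (hd j)
    _ ≤ ∑ j, d j * normSq (X i j) :=
      Finset.single_le_sum (fun l _ ↦ mul_nonneg (zero_le_one.trans (hd l)) (normSq_nonneg _))
        (Finset.mem_univ j)

theorem exists_int_matrix_eq_of_mem_ringO {m : ℕ} (hm : 0 < m)
    (hne : m ∉ ({1, 2, 3, 7, 11} : Set ℕ)) {d : n → ℤ} (hd : ∀ j, 1 ≤ d j)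
    {G : Matrix k k ℤ} (hG : ∀ i, G i i ≤ 3) {X : Matrix k n ℂ} (hX : ∀ i j, X i j ∈ ringO m)
    (h : G.map (↑) = X * diagonal (fun j ↦ (d j : ℂ)) * Xᴴ) :
    ∃ Y : Matrix k n ℤ, G = Y * diagonal d * Yᵀ := by
  have hnormSq (i : k) (j : n) : normSq (X i j) ≤ 3 :=
    (normSq_le_of_mul_diagonal_mul_conjTranspose_apply_self_eq X (d := fun j ↦ (d j : ℝ))
      (fun j ↦ by exact_mod_cast hd j) i j (c := G i i)
      (by simpa using (congrFun₂ h i i).symm)).trans (by exact_mod_cast hG i)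
  choose Y hY using fun i j ↦
    exists_intCast_eq_of_mem_ringO_of_normSq_le_three hm hne (hX i j) (hnormSq i j)
  obtain rfl : (of Y).map (↑) = X := Matrix.ext hY
  refine ⟨of Y, Matrix.map_injective Int.cast_injective (h.trans ?_)⟩
  ext i j
  simp [mul_apply, diagonal_apply]

end Gram

theorem sq_le_one_of_sq_lt_four {x : ℤ} (h : x ^ 2 < 4) : x ^ 2 ≤ 1 := by
  have : |x| < 2 := abs_lt_of_sq_lt_sq (by linarith) (by norm_num)
  rw [sq_le_one_iff_abs_le_one]
  omega

theorem false_of_sq_add_sq_add_sq (a₀ a₁ a₂ b₀ b₁ b₂ : ℤ)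
    (ha : a₀ ^ 2 + a₁ ^ 2 + a₂ ^ 2 = 1) (hb : b₀ ^ 2 + b₁ ^ 2 + b₂ ^ 2 = 3)
    (hab : a₀ * b₀ + a₁ * b₁ + a₂ * b₂ = 0) : False := by
  have h₀ := sq_le_one_of_sq_lt_four (x := b₀) (by nlinarith [sq_nonneg b₁, sq_nonneg b₂])
  have h₁ := sq_le_one_of_sq_lt_four (x := b₁) (by nlinarith [sq_nonneg b₀, sq_nonneg b₂])
  have h₂ := sq_le_one_of_sq_lt_four (x := b₂) (by nlinarith [sq_nonneg b₀, sq_nonneg b₁])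
  have mod_two : ∀ x y z u v w : ZMod 2, x ^ 2 + y ^ 2 + z ^ 2 = 1 → u ^ 2 = 1 → v ^ 2 = 1 →
      w ^ 2 = 1 → x * u + y * v + z * w ≠ 0 := by decide
  apply mod_two a₀ a₁ a₂ b₀ b₁ b₂ <;> norm_cast <;>
    simp [ha, hab, show b₀ ^ 2 = 1 by omega, show b₁ ^ 2 = 1 by omega, show b₂ ^ 2 = 1 by omega]

theorem sq_eq_one_of_sq_add_sq_add_two_mul_sq_eq_three {x y z : ℤ}
    (h : x ^ 2 + y ^ 2 + 2 * z ^ 2 = 3) : z ^ 2 = 1 ∧ x ^ 2 + y ^ 2 = 1 := by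
  have hx := sq_le_one_of_sq_lt_four (x := x) (by nlinarith [sq_nonneg y, sq_nonneg z])
  have hy := sq_le_one_of_sq_lt_four (x := y) (by nlinarith [sq_nonneg x, sq_nonneg z])
  have hz := sq_le_one_of_sq_lt_four (x := z) (by nlinarith [sq_nonneg x, sq_nonneg y])
  omega

theorem false_of_sq_add_sq_add_two_mul_sq (a₀ a₁ a₂ b₀ b₁ b₂ : ℤ)
    (ha : a₀ ^ 2 + a₁ ^ 2 + 2 * a₂ ^ 2 = 3) (hb : b₀ ^ 2 + b₁ ^ 2 + 2 * b₂ ^ 2 = 3)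
    (hab : a₀ * b₀ + a₁ * b₁ + 2 * (a₂ * b₂) = 0) : False := by
  obtain ⟨ha₂, ha⟩ := sq_eq_one_of_sq_add_sq_add_two_mul_sq_eq_three ha
  obtain ⟨hb₂, hb⟩ := sq_eq_one_of_sq_add_sq_add_two_mul_sq_eq_three hb
  have : (a₀ * b₀ + a₁ * b₁) ^ 2 = 4 := by
    linear_combination (a₀ * b₀ + a₁ * b₁ - 2 * (a₂ * b₂)) * hab + 4 * a₂ ^ 2 * hb₂ + 4 * ha₂
  nlinarith [sq_nonneg (a₀ * b₁ - a₁ * b₀)]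

theorem not_exists_int_mul_transpose_eq_diag13 :
    ¬∃ Y : Matrix (Fin 2) (Fin 3) ℤ, !![1, 0; 0, 3] = Y * Yᵀ := by
  rintro ⟨Y, hY⟩
  have h₀₀ := congrFun₂ hY 0 0
  have h₁₁ := congrFun₂ hY 1 1
  have h₀₁ := congrFun₂ hY 0 1
  simp only [mul_apply, transpose_apply, Fin.sum_univ_three, of_apply, cons_val', cons_val_zero,
    cons_val_one, cons_val_fin_one] at h₀₀ h₁₁ h₀₁
  exact false_of_sq_add_sq_add_sq (Y 0 0) (Y 0 1) (Y 0 2) (Y 1 0) (Y 1 1) (Y 1 2)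
    (by linear_combination -h₀₀) (by linear_combination -h₁₁) (by linear_combination -h₀₁)

theorem not_exists_int_mul_diagonal_mul_transpose_eq_diag33 :
    ¬∃ Y : Matrix (Fin 2) (Fin 3) ℤ,
      !![3, 0; 0, 3] = Y * diagonal (![1, 1, 2] : Fin 3 → ℤ) * Yᵀ := by
  rintro ⟨Y, hY⟩
  have h₀₀ := congrFun₂ hY 0 0
  have h₁₁ := congrFun₂ hY 1 1
  have h₀₁ := congrFun₂ hY 0 1
  rw [mul_apply] at h₀₀ h₁₁ h₀₁
  simp only [mul_diagonal, transpose_apply, Fin.sum_univ_three, of_apply, cons_val', cons_val_zero,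
    cons_val_one, cons_val, cons_val_fin_one] at h₀₀ h₁₁ h₀₁
  exact false_of_sq_add_sq_add_two_mul_sq (Y 0 0) (Y 0 1) (Y 0 2) (Y 1 0) (Y 1 1) (Y 1 2)
    (by linear_combination -h₀₀) (by linear_combination -h₁₁) (by linear_combination -h₀₁)

theorem diag13_and_diag33_not_represented_general (m : ℕ) (hm : 0 < m)
    (hne : m ∉ ({1, 2, 3, 7, 11} : Set ℕ)) :
    (¬∃ X : Matrix (Fin 2) (Fin 3) ℂ, (∀ i j, X i j ∈ ringO m) ∧
      !![(1 : ℂ), 0; 0, 3] = X * Xᴴ) ∧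
    (¬∃ X : Matrix (Fin 2) (Fin 3) ℂ, (∀ i j, X i j ∈ ringO m) ∧
      !![(3 : ℂ), 0; 0, 3] = X * Matrix.diagonal ![(1 : ℂ), 1, 2] * Xᴴ) := by
  constructor
  · rintro ⟨X, hX, h⟩
    obtain ⟨Y, hY⟩ := exists_int_matrix_eq_of_mem_ringO hm hne (d := fun _ ↦ 1)
      (fun _ ↦ le_rfl) (G := !![1, 0; 0, 3]) (by simp [Fin.forall_fin_two]) hX
      (by norm_num [← h, ← Matrix.ext_iff, Fin.forall_fin_two])
    exact not_exists_int_mul_transpose_eq_diag13 ⟨Y, by simpa using hY⟩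
  · rintro ⟨X, hX, h⟩
    have hd : (fun j ↦ ((![1, 1, 2] : Fin 3 → ℤ) j : ℂ)) = ![(1 : ℂ), 1, 2] := by
      ext j; fin_cases j <;> simp
    obtain ⟨Y, hY⟩ := exists_int_matrix_eq_of_mem_ringO hm hne (d := ![1, 1, 2])
      (by simp [Fin.forall_fin_succ]) (G := !![3, 0; 0, 3]) (by simp [Fin.forall_fin_two]) hX
      (by rw [hd, ← h]; norm_num [← Matrix.ext_iff, Fin.forall_fin_two])
    exact not_exists_int_mul_diagonal_mul_transpose_eq_diag33 ⟨Y, hY⟩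

theorem diag13_and_diag33_not_represented (m : ℕ) (hm : 0 < m) (hsf : Squarefree m)
    (hne : m ∉ ({1, 2, 3, 7, 11} : Set ℕ)) :
    (¬∃ X : Matrix (Fin 2) (Fin 3) ℂ, (∀ i j, X i j ∈ ringO m) ∧
      !![(1 : ℂ), 0; 0, 3] = X * Xᴴ) ∧
    (¬∃ X : Matrix (Fin 2) (Fin 3) ℂ, (∀ i j, X i j ∈ ringO m) ∧
      !![(3 : ℂ), 0; 0, 3] = X * Matrix.diagonal ![(1 : ℂ), 1, 2] * Xᴴ) :=
  diag13_and_diag33_not_represented_general m hm hne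
end

section
/- Over the ring of integers 𝒪 = ℤ[√-2] of ℚ(√-2), the binary Hermitian lattice with Gram matrix [[2, -1+√-2],[-1-√-2, 2]] is represented by neither ⟨1,1,1⟩ nor ⟨1,1,2⟩. -/
/-!
Write `𝒪 = ℤ[√-2]`. For positive integer weights `dᵢ`, a vector `x ∈ 𝒪ⁿ` with
`Σ dᵢ |xᵢ|² = 2` is either real or purely imaginary: writing `xᵢ = aᵢ + bᵢ√-2`, the norm is
`Σ dᵢ aᵢ² + 2 Σ dᵢ bᵢ²`, so if some `bᵢ ≠ 0` all `aᵢ` vanish. The Hermitian product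
`Σ dᵢ xᵢ ȳᵢ` of two such vectors is then real or purely imaginary, whereas the off-diagonal
Gram entry `-1 + √-2` is neither. Hence the lattice is represented by no positive diagonal
form over `𝒪`.
-/

open Complex Matrix

open ComplexConjugate

lemma omg_two : omg 2 = Real.sqrt 2 * I := by norm_num [omg]

lemma exists_int_re_im_of_mem_ringO_two {z : ℂ} (hz : z ∈ ringO 2) :
    ∃ a b : ℤ, z.re = a ∧ z.im = b * Real.sqrt 2 := by
  induction hz using Algebra.adjoin_induction with
  | mem w hw => exact ⟨0, 1, by simp [Set.mem_singleton_iff.mp hw, omg_two]⟩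
  | algebraMap n => exact ⟨n, 0, by simp⟩
  | add w v _ _ hw hv =>
    obtain ⟨a, b, hwa, hwb⟩ := hw
    obtain ⟨c, d, hvc, hvd⟩ := hv
    exact ⟨a + c, b + d, by simp [hwa, hvc], by simp [hwb, hvd]; ring⟩
  | mul w v _ _ hw hv =>
    obtain ⟨a, b, hwa, hwb⟩ := hw
    obtain ⟨c, d, hvc, hvd⟩ := hv
    have h2 : Real.sqrt 2 * Real.sqrt 2 = 2 := Real.mul_self_sqrt zero_le_two
    refine ⟨a * c - 2 * b * d, a * d + b * c, ?_, ?_⟩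
    · simp only [mul_re, hwa, hwb, hvc, hvd]; push_cast; linear_combination -(b * d : ℝ) * h2
    · simp only [mul_im, hwa, hwb, hvc, hvd]; push_cast; ring

lemma eq_zero_of_sum_mul_sq_eq_zero {ι : Type*} [Fintype ι] {d : ι → ℕ} (hd : ∀ i, 0 < d i)
    {c : ι → ℤ} (h : ∑ i, (d i : ℤ) * c i ^ 2 = 0) (i : ι) : c i = 0 := by
  have hi := (Finset.sum_eq_zero_iff_of_nonneg (fun j _ => by positivity)).mp h i
    (Finset.mem_univ i)
  simpa [(hd i).ne'] using hi

lemma eq_zero_or_eq_zero_of_sum_add_two_mul_sum_eq_two {ι : Type*} [Fintype ι] {d : ι → ℕ}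
    (hd : ∀ i, 0 < d i) {a b : ι → ℤ}
    (h : ∑ i, (d i : ℤ) * a i ^ 2 + 2 * ∑ i, (d i : ℤ) * b i ^ 2 = 2) :
    (∀ i, b i = 0) ∨ (∀ i, a i = 0) := by
  have ha : 0 ≤ ∑ i, (d i : ℤ) * a i ^ 2 := Finset.sum_nonneg fun i _ => by positivity
  have hb : 0 ≤ ∑ i, (d i : ℤ) * b i ^ 2 := Finset.sum_nonneg fun i _ => by positivity
  by_cases hb0 : ∑ i, (d i : ℤ) * b i ^ 2 = 0
  · exact .inl (eq_zero_of_sum_mul_sq_eq_zero hd hb0)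
  · exact .inr (eq_zero_of_sum_mul_sq_eq_zero hd (by omega))

lemma im_eq_zero_or_re_eq_zero_of_sum_mul_normSq_eq_two {ι : Type*} [Fintype ι]
    {d : ι → ℕ} (hd : ∀ i, 0 < d i) {x : ι → ℂ} (hx : ∀ i, x i ∈ ringO 2)
    (h : ∑ i, (d i : ℝ) * normSq (x i) = 2) :
    (∀ i, (x i).im = 0) ∨ (∀ i, (x i).re = 0) := by
  choose a b hre him using fun i => exists_int_re_im_of_mem_ringO_two (hx i)
  have h2 : Real.sqrt 2 ^ 2 = 2 := Real.sq_sqrt zero_le_two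
  have hab : ∑ i, (d i : ℤ) * a i ^ 2 + 2 * ∑ i, (d i : ℤ) * b i ^ 2 = 2 := by
    have hnorm : ∀ i, normSq (x i) = a i ^ 2 + 2 * b i ^ 2 := fun i => by
      rw [normSq_apply, hre, him]; linear_combination (b i : ℝ) ^ 2 * h2
    simp only [hnorm] at h
    have hR : ∑ i, (d i : ℝ) * (a i : ℝ) ^ 2 + 2 * ∑ i, (d i : ℝ) * (b i : ℝ) ^ 2 = 2 := by
      refine Eq.trans ?_ h
      rw [Finset.mul_sum, ← Finset.sum_add_distrib]
      exact Finset.sum_congr rfl fun i _ => by ring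
    exact_mod_cast hR
  refine (eq_zero_or_eq_zero_of_sum_add_two_mul_sum_eq_two hd hab).imp (fun hb i => ?_)
    (fun ha i => ?_)
  · simp [him, hb]
  · simp [hre, ha]

lemma re_eq_zero_or_im_eq_zero_sum_mul_conj {ι : Type*} [Fintype ι] (w : ι → ℝ) {x y : ι → ℂ}
    (hx : (∀ i, (x i).im = 0) ∨ (∀ i, (x i).re = 0))
    (hy : (∀ i, (y i).im = 0) ∨ (∀ i, (y i).re = 0)) :
    (∑ i, (w i : ℂ) * (x i * conj (y i))).re = 0 ∨
      (∑ i, (w i : ℂ) * (x i * conj (y i))).im = 0 := by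
  simp only [re_sum, im_sum, mul_re, mul_im, conj_re, conj_im]
  rcases hx with hx | hx <;> rcases hy with hy | hy <;> simp [hx, hy]

theorem not_represented_by_diagonal {ι : Type*} [Fintype ι] [DecidableEq ι] {d : ι → ℕ}
    (hd : ∀ i, 0 < d i) :
    ¬∃ X : Matrix (Fin 2) ι ℂ, (∀ i j, X i j ∈ ringO 2) ∧
      !![(2 : ℂ), -1 + omg 2; -1 - omg 2, 2] = X * diagonal (fun k => (d k : ℂ)) * Xᴴ := by
  rintro ⟨X, hX, hG⟩
  have hform : ∀ i j, (X * diagonal (fun k => (d k : ℂ)) * Xᴴ) i j =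
      ∑ k, ((d k : ℝ) : ℂ) * (X i k * conj (X j k)) := fun i j => by
    rw [mul_apply]
    simp only [mul_diagonal, conjTranspose_apply]
    congr 1; ext k; simp only [RCLike.star_def, ofReal_natCast]; ring
  have hnorm : ∀ i, ∑ k, (d k : ℝ) * normSq (X i k) = 2 := fun i => by
    have := congrArg re ((congrFun (congrFun hG i) i).trans (hform i i))
    fin_cases i <;> simpa [mul_conj, ← ofReal_natCast, ← ofReal_mul, re_sum] using this.symm
  have hoff := (congrFun (congrFun hG 0) 1).trans (hform 0 1)
  have hoff_re : (-1 + omg 2).re ≠ 0 := by simp [omg_two]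
  have hoff_im : (-1 + omg 2).im ≠ 0 := by simp [omg_two]
  simp only [Fin.isValue, of_apply, cons_val', cons_val_zero, cons_val_one, empty_val',
    cons_val_fin_one] at hoff
  rcases re_eq_zero_or_im_eq_zero_sum_mul_conj (fun k => (d k : ℝ))
    (im_eq_zero_or_re_eq_zero_of_sum_mul_normSq_eq_two hd (hX 0) (hnorm 0))
    (im_eq_zero_or_re_eq_zero_of_sum_mul_normSq_eq_two hd (hX 1) (hnorm 1)) with h | h
  · exact hoff_re (hoff ▸ h)
  · exact hoff_im (hoff ▸ h)

theorem binary_lattice_not_represented_over_Qsqrtneg2 :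
    (¬∃ X : Matrix (Fin 2) (Fin 3) ℂ, (∀ i j, X i j ∈ ringO 2) ∧
      !![(2 : ℂ), -1 + omg 2; -1 - omg 2, 2] = X * Xᴴ) ∧
    (¬∃ X : Matrix (Fin 2) (Fin 3) ℂ, (∀ i j, X i j ∈ ringO 2) ∧
      !![(2 : ℂ), -1 + omg 2; -1 - omg 2, 2] = X * Matrix.diagonal ![(1 : ℂ), 1, 2] * Xᴴ) := by
  refine ⟨fun ⟨X, hX, hG⟩ => not_represented_by_diagonal (d := fun _ => 1) (fun _ => one_pos)
      ⟨X, hX, by simpa using hG⟩,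
    fun ⟨X, hX, hG⟩ => not_represented_by_diagonal (d := ![1, 1, 2]) (by decide) ⟨X, hX, ?_⟩⟩
  convert hG using 4
  ext k
  fin_cases k <;> simp
end

section
/- Over the ring of integers 𝒪 = ℤ[ω] of ℚ(√-11), where ω = (1+√-11)/2, neither the binary Hermitian lattice with Gram matrix [[2, ω],[ω̄, 2]] nor the one with Gram matrix [[2, -1+ω],[-1+ω̄, 2]] is represented by ⟨1,1,1⟩ or by ⟨1,1,2⟩. -/
open Complex Matrix

/-!
An element `a + b ω` of `𝒪` has norm `(a + b/2)² + 11 b²/4`, so the only elements of norm at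
most `2` are rational integers. If `X diag(w) X*` has diagonal entries `2` with weights
`w j ≥ 1`, every entry of `X` has norm at most `2`, hence is real, and then so is the
off-diagonal entry of `X diag(w) X*`. But `ω` and `-1 + ω` are not real.
-/

open ComplexConjugate

lemma omg_eleven_re : (omg 11).re = 1 / 2 := by
  simp [omg]

lemma omg_eleven_im : (omg 11).im = Real.sqrt 11 / 2 := by
  simp [omg]

lemma omg_eleven_mul_self : omg 11 * omg 11 = omg 11 - 3 := by
  have h11 : Real.sqrt 11 * Real.sqrt 11 = 11 := Real.mul_self_sqrt (by norm_num)
  apply Complex.ext <;> simp [Complex.mul_re, Complex.mul_im, omg_eleven_re, omg_eleven_im] <;>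
    nlinarith

lemma exists_int_eq_of_mem_ringO_eleven {x : ℂ} (hx : x ∈ ringO 11) :
    ∃ a b : ℤ, x = a + b * omg 11 := by
  induction hx using Algebra.adjoin_induction with
  | mem y hy => exact ⟨0, 1, by simp [Set.mem_singleton_iff.mp hy]⟩
  | algebraMap n => exact ⟨n, 0, by simp⟩
  | add x y _ _ hx hy =>
    obtain ⟨a, b, rfl⟩ := hx
    obtain ⟨c, d, rfl⟩ := hy
    exact ⟨a + c, b + d, by push_cast; ring⟩
  | mul x y _ _ hx hy =>
    obtain ⟨a, b, rfl⟩ := hx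
    obtain ⟨c, d, rfl⟩ := hy
    refine ⟨a * c - 3 * (b * d), a * d + b * c + b * d, ?_⟩
    push_cast
    linear_combination ((b : ℂ) * d) * omg_eleven_mul_self

lemma im_eq_zero_of_mem_ringO_eleven_of_normSq_le_two {x : ℂ} (hx : x ∈ ringO 11)
    (hnorm : normSq x ≤ 2) : x.im = 0 := by
  obtain ⟨a, b, rfl⟩ := exists_int_eq_of_mem_ringO_eleven hx
  have h11 : Real.sqrt 11 * Real.sqrt 11 = 11 := Real.mul_self_sqrt (by norm_num)
  simp only [normSq_apply, add_re, add_im, mul_re, mul_im, intCast_re, intCast_im,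
    omg_eleven_re, omg_eleven_im, zero_mul, sub_zero, add_zero, zero_add] at hnorm ⊢
  obtain rfl | hb := eq_or_ne b 0
  · simp
  have hb1 : (1 : ℝ) ≤ (b : ℝ) ^ 2 := by
    exact_mod_cast (one_le_sq_iff_one_le_abs b).mpr (Int.one_le_abs hb)
  nlinarith [sq_nonneg ((a : ℝ) + b * (1 / 2))]

section Hermitian

variable {m n : Type*} [Fintype n] [DecidableEq n]

lemma mul_diagonal_mul_conjTranspose_apply (X : Matrix m n ℂ) (d : n → ℂ) (i k : m) :
    (X * diagonal d * Xᴴ) i k = ∑ j, X i j * d j * conj (X k j) := by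
  simp only [mul_apply (M := X * diagonal d), mul_diagonal, conjTranspose_apply, star_def]

lemma re_mul_diagonal_ofReal_mul_conjTranspose_apply_self (X : Matrix m n ℂ) (w : n → ℝ)
    (i : m) :
    ((X * diagonal (fun j ↦ (w j : ℂ)) * Xᴴ) i i).re = ∑ j, w j * normSq (X i j) := by
  rw [mul_diagonal_mul_conjTranspose_apply, re_sum]
  refine Finset.sum_congr rfl fun j _ ↦ ?_
  rw [mul_right_comm, mul_conj, ← ofReal_mul, ofReal_re, mul_comm]

lemma normSq_le_re_mul_diagonal_ofReal_mul_conjTranspose_apply_self (X : Matrix m n ℂ)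
    {w : n → ℝ} (hw : ∀ j, 1 ≤ w j) (i : m) (j : n) :
    normSq (X i j) ≤ ((X * diagonal (fun j ↦ (w j : ℂ)) * Xᴴ) i i).re := by
  rw [re_mul_diagonal_ofReal_mul_conjTranspose_apply_self]
  calc normSq (X i j) ≤ w j * normSq (X i j) := le_mul_of_one_le_left (normSq_nonneg _) (hw j)
    _ ≤ ∑ j, w j * normSq (X i j) :=
      Finset.single_le_sum (fun k _ ↦ mul_nonneg (zero_le_one.trans (hw k)) (normSq_nonneg _))
        (Finset.mem_univ j)

lemma im_mul_diagonal_ofReal_mul_conjTranspose_apply {X : Matrix m n ℂ}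
    (hX : ∀ i j, (X i j).im = 0) (w : n → ℝ) (i k : m) :
    ((X * diagonal (fun j ↦ (w j : ℂ)) * Xᴴ) i k).im = 0 := by
  rw [mul_diagonal_mul_conjTranspose_apply, im_sum]
  exact Finset.sum_eq_zero fun j _ ↦ by simp [mul_im, hX]


lemma im_mul_diagonal_mul_conjTranspose_eq_zero_of_mem_ringO_eleven {X : Matrix m n ℂ}
    (hX : ∀ i j, X i j ∈ ringO 11) {w : n → ℝ} (hw : ∀ j, 1 ≤ w j)
    (hdiag : ∀ i, ((X * diagonal (fun j ↦ (w j : ℂ)) * Xᴴ) i i).re ≤ 2) (i k : m) :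
    ((X * diagonal (fun j ↦ (w j : ℂ)) * Xᴴ) i k).im = 0 :=
  im_mul_diagonal_ofReal_mul_conjTranspose_apply (fun i j ↦
    im_eq_zero_of_mem_ringO_eleven_of_normSq_le_two (hX i j)
      ((normSq_le_re_mul_diagonal_ofReal_mul_conjTranspose_apply_self X hw i j).trans (hdiag i)))
    w i k

lemma not_exists_ringO_eleven_gram_eq_of_im_ne_zero {c : ℂ} (hc : c.im ≠ 0) {w : n → ℝ}
    (hw : ∀ j, 1 ≤ w j) :
    ¬∃ X : Matrix (Fin 2) n ℂ, (∀ i j, X i j ∈ ringO 11) ∧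
      !![(2 : ℂ), c; conj c, 2] = X * diagonal (fun j ↦ (w j : ℂ)) * Xᴴ := by
  rintro ⟨X, hX, hM⟩
  have hdiag : ∀ i, ((X * diagonal (fun j ↦ (w j : ℂ)) * Xᴴ) i i).re ≤ 2 := by
    intro i
    fin_cases i <;> simp [← hM]
  apply hc
  simpa [← hM] using im_mul_diagonal_mul_conjTranspose_eq_zero_of_mem_ringO_eleven hX hw hdiag 0 1

end Hermitian

theorem binary_lattices_not_represented_over_Qsqrtneg11 :
    (¬∃ X : Matrix (Fin 2) (Fin 3) ℂ, (∀ i j, X i j ∈ ringO 11) ∧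
      !![(2 : ℂ), omg 11; (starRingEnd ℂ) (omg 11), 2] = X * Xᴴ) ∧
    (¬∃ X : Matrix (Fin 2) (Fin 3) ℂ, (∀ i j, X i j ∈ ringO 11) ∧
      !![(2 : ℂ), omg 11; (starRingEnd ℂ) (omg 11), 2]
        = X * Matrix.diagonal ![(1 : ℂ), 1, 2] * Xᴴ) ∧
    (¬∃ X : Matrix (Fin 2) (Fin 3) ℂ, (∀ i j, X i j ∈ ringO 11) ∧
      !![(2 : ℂ), -1 + omg 11; -1 + (starRingEnd ℂ) (omg 11), 2] = X * Xᴴ) ∧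
    (¬∃ X : Matrix (Fin 2) (Fin 3) ℂ, (∀ i j, X i j ∈ ringO 11) ∧
      !![(2 : ℂ), -1 + omg 11; -1 + (starRingEnd ℂ) (omg 11), 2]
        = X * Matrix.diagonal ![(1 : ℂ), 1, 2] * Xᴴ) := by
  have hω : (omg 11).im ≠ 0 := by rw [omg_eleven_im]; positivity
  have hω_sub_one : (-1 + omg 11).im ≠ 0 := by simpa using hω
  have hconj : -1 + conj (omg 11) = conj (-1 + omg 11) := by simp
  have hunit (X : Matrix (Fin 2) (Fin 3) ℂ) :
      X * Xᴴ = X * diagonal (fun _ : Fin 3 ↦ ((1 : ℝ) : ℂ)) * Xᴴ := by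
    rw [ofReal_one, diagonal_one, Matrix.mul_one]
  have hweights :
      diagonal ![(1 : ℂ), 1, 2] = diagonal (fun j ↦ ((![1, 1, 2] j : ℝ) : ℂ)) := by
    congr 1; ext j; fin_cases j <;> simp
  have hw (j : Fin 3) : (1 : ℝ) ≤ ![1, 1, 2] j := by fin_cases j <;> norm_num
  simp_rw [hunit, hweights, hconj]
  exact ⟨not_exists_ringO_eleven_gram_eq_of_im_ne_zero hω fun _ ↦ le_rfl,
    not_exists_ringO_eleven_gram_eq_of_im_ne_zero hω hw,
    not_exists_ringO_eleven_gram_eq_of_im_ne_zero hω_sub_one fun _ ↦ le_rfl,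
    not_exists_ringO_eleven_gram_eq_of_im_ne_zero hω_sub_one hw⟩
end

section
/- Over the Gaussian integers ℤ[i], the binary Hermitian lattice with Gram matrix [[2,1],[1,2]] is not represented by the ternary Hermitian lattice ⟨1,1,2⟩. -/
/-!
Reduce modulo the prime `1 + i` above `2`. The residue field is `𝔽₂`, on which complex
conjugation becomes trivial and `2` vanishes, so a representation `X` would give rows
`x, y ∈ 𝔽₂³` with `x₀² + x₁² = y₀² + y₁² = 0` and `x₀ y₀ + x₁ y₁ = 1`. Squaring is the identity
on `𝔽₂`, so `x₀ = x₁` and `y₀ = y₁`, and then `x₀ y₀ + x₁ y₁ = 2 x₀ y₀ = 0`.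
-/

open Complex Matrix

namespace Matrix

variable {m n R S : Type*} [Fintype n] [NonAssocSemiring R] [StarRing R] [NonAssocSemiring S]

theorem map_mul_mul_conjTranspose [StarRing S] (f : R →+* S)
    (hf : Function.Semiconj f star star) (Y : Matrix m n R) (B : Matrix n n R) :
    (Y * B * Yᴴ).map f = Y.map f * B.map f * (Y.map f)ᴴ := by
  rw [Matrix.map_mul, Matrix.map_mul, conjTranspose_map f hf]

theorem map_mul_mul_conjTranspose_of_map_star (f : R →+* S) (hf : ∀ x, f (star x) = f x)
    (Y : Matrix m n R) (B : Matrix n n R) :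
    (Y * B * Yᴴ).map f = Y.map f * B.map f * (Y.map f)ᵀ := by
  rw [Matrix.map_mul, Matrix.map_mul]
  congr 1
  ext i j
  exact hf _

end Matrix

section

variable {R S : Type*} [NonAssocSemiring R] [NonAssocSemiring S]

theorem map_gram_2112 (f : R →+* S) :
    (!![2, 1; 1, 2] : Matrix (Fin 2) (Fin 2) R).map f = !![2, 1; 1, 2] := by
  ext i j
  fin_cases i <;> fin_cases j <;> simp [map_ofNat]

theorem map_diagonal_112 (f : R →+* S) :
    (diagonal ![1, 1, 2] : Matrix (Fin 3) (Fin 3) R).map f = diagonal ![1, 1, 2] := by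
  ext i j
  fin_cases i <;> fin_cases j <;> simp [map_ofNat]

end

theorem gram_2112_ne_mul_diag112_mul_transpose (Z : Matrix (Fin 2) (Fin 3) (ZMod 2)) :
    !![2, 1; 1, 2] ≠ Z * diagonal ![(1 : ZMod 2), 1, 2] * Zᵀ := by
  revert Z
  decide

namespace GaussianInt

theorem ringO_one_le_range_toComplex : ringO 1 ≤ toComplex.toIntAlgHom.range := by
  have hI : omg 1 = I := by simp [omg]
  rw [ringO, hI, Algebra.adjoin_le_iff, Set.singleton_subset_iff]
  exact ⟨⟨0, 1⟩, by simp [toComplex_def']⟩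

theorem exists_map_toComplex_eq {m n : Type*} {X : Matrix m n ℂ}
    (hX : ∀ i j, X i j ∈ ringO 1) : ∃ Y : Matrix m n GaussianInt, Y.map toComplex = X := by
  choose Y hY using fun i j => ringO_one_le_range_toComplex (hX i j)
  exact ⟨Y, Matrix.ext hY⟩

/-- Reduction modulo `1 + i`, i.e. `a + b i ↦ a + b`. -/
def modOnePlusI : GaussianInt →+* ZMod 2 := Zsqrtd.lift ⟨1, rfl⟩

theorem modOnePlusI_star (z : GaussianInt) : modOnePlusI (star z) = modOnePlusI z := by
  simp [modOnePlusI, ZMod.neg_eq_self_mod_two]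

end GaussianInt

open GaussianInt

theorem gram_2112_not_represented_by_diag112_gaussian :
    ¬∃ X : Matrix (Fin 2) (Fin 3) ℂ, (∀ i j, X i j ∈ ringO 1) ∧
      !![(2 : ℂ), 1; 1, 2] = X * Matrix.diagonal ![(1 : ℂ), 1, 2] * Xᴴ := by
  rintro ⟨X, hX, h⟩
  obtain ⟨Y, rfl⟩ := exists_map_toComplex_eq hX
  have hY : !![2, 1; 1, 2] = Y * diagonal ![(1 : GaussianInt), 1, 2] * Yᴴ := by
    refine Matrix.map_injective toComplex_injective ?_
    beta_reduce
    rwa [map_mul_mul_conjTranspose toComplex toComplex_star, map_gram_2112, map_diagonal_112]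
  apply gram_2112_ne_mul_diag112_mul_transpose (Y.map modOnePlusI)
  have hZ := congrArg (Matrix.map · modOnePlusI) hY
  beta_reduce at hZ
  rwa [map_mul_mul_conjTranspose_of_map_star modOnePlusI modOnePlusI_star, map_gram_2112,
    map_diagonal_112] at hZ
end

section
/- Let L be a Hermitian ℤ[i]-lattice with basis v₁,…,vₙ such that H(vⱼ) is odd for each j. Then the set Lₑ of vectors of L with even Hermitian norm is a sublattice of L with ℤ[i]-basis v₁-v₂, v₂-v₃, …, v_{n-1}-vₙ, v_{n-1}+i·vₙ. -/
/-!
Reduction modulo the prime `1 + i` is a ring map `ℤ[i] → 𝔽₂` that commutes with conjugation.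
Modulo `1 + i` the Gram matrix becomes symmetric with unit diagonal, so in characteristic two
`H(x) ≡ ∑ xᵢ² ≡ ∑ xᵢ`; as `H(x)` is a rational integer, it is even iff `1 + i` divides `∑ xᵢ`.
The given vectors span exactly this submodule by telescoping. It contains `(1 + i) L`, so the
matrix of the vectors times some integral matrix is `(1 + i) · 1`; its determinant is nonzero,
whence linear independence.
-/

open Matrix

/-- The basis vectors v₁-v₂, v₂-v₃, …, v_{n-1}-vₙ, v_{n-1}+i·vₙ of the even sublattice,
written in coordinates with respect to the basis v₁, …, vₙ (so vⱼ ↦ eⱼ). -/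
noncomputable def evenBasis (n : ℕ) : Fin n → (Fin n → GaussianInt) := fun j =>
  if h : (j : ℕ) + 1 < n then
    Pi.single j 1 - Pi.single (⟨(j : ℕ) + 1, h⟩ : Fin n) 1
  else
    Pi.single (⟨n - 2, by have := j.isLt; omega⟩ : Fin n) 1 +
      Pi.single (⟨n - 1, by have := j.isLt; omega⟩ : Fin n) (⟨0, 1⟩ : GaussianInt)

open Finset

theorem sum_sum_eq_sum_diag_of_charTwo {ι R : Type*} [CommRing R] [CharP R 2]
    (s : Finset ι) (f : ι → ι → R) (hf : ∀ i j, f i j = f j i) :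
    ∑ i ∈ s, ∑ j ∈ s, f i j = ∑ i ∈ s, f i i := by
  classical
  induction s using Finset.induction_on with
  | empty => simp
  | insert a s ha ih =>
    simp only [sum_insert ha, sum_add_distrib, ← ih]
    simp only [hf _ a]
    linear_combination CharTwo.add_self_eq_zero (∑ x ∈ s, f a x)

theorem Matrix.IsHermitian.star_sum_mul_star {n R : Type*} [Fintype n] [CommRing R] [StarRing R]
    {M : Matrix n n R} (hM : M.IsHermitian) (x : n → R) :
    star (∑ i, ∑ j, x i * M i j * star (x j)) = ∑ i, ∑ j, x i * M i j * star (x j) := by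
  simp only [star_sum, star_mul', star_star, hM.apply]
  rw [sum_comm]
  exact sum_congr rfl fun _ _ => sum_congr rfl fun _ _ => by ring

namespace GaussianInt

def toZModTwo : GaussianInt →+* ZMod 2 := Zsqrtd.lift ⟨1, by decide⟩

theorem toZModTwo_apply (z : GaussianInt) : toZModTwo z = z.re + z.im := by
  simp [toZModTwo]

theorem toZModTwo_star (z : GaussianInt) : toZModTwo (star z) = toZModTwo z := by
  simp [toZModTwo_apply, ZMod.neg_eq_self_mod_two]

theorem toZModTwo_eq_zero_iff_dvd (z : GaussianInt) :
    toZModTwo z = 0 ↔ (⟨1, 1⟩ : GaussianInt) ∣ z := by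
  constructor
  · intro h
    obtain ⟨m, hm⟩ : ((2 : ℕ) : ℤ) ∣ z.re + z.im := by
      rw [← ZMod.intCast_zmod_eq_zero_iff_dvd]; push_cast; rwa [← toZModTwo_apply]
    exact ⟨⟨m, z.im - m⟩, by ext <;> simp; omega⟩
  · rintro ⟨w, rfl⟩
    rw [map_mul, show toZModTwo ⟨1, 1⟩ = 0 by decide, zero_mul]

theorem exists_eq_two_mul_iff_toZModTwo_eq_zero {z : GaussianInt} (hz : star z = z) :
    (∃ k : ℤ, z = 2 * k) ↔ toZModTwo z = 0 := by
  have him : z.im = 0 := by have := congrArg Zsqrtd.im hz; simp at this; omega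
  rw [toZModTwo_apply, him, Int.cast_zero, add_zero, ZMod.intCast_zmod_eq_zero_iff_dvd]
  constructor
  · rintro ⟨k, rfl⟩; simp
  · rintro ⟨k, hk⟩; exact ⟨k, by ext <;> simp [hk, him]⟩

end GaussianInt

open GaussianInt

theorem toZModTwo_sum_mul_star {n : Type*} [Fintype n] {M : Matrix n n GaussianInt}
    (hM : M.IsHermitian) (hodd : ∀ j, ∃ k : ℤ, M j j = 2 * k + 1) (x : n → GaussianInt) :
    toZModTwo (∑ i, ∑ j, x i * M i j * star (x j)) = toZModTwo (∑ i, x i) := by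
  have hdiag : ∀ i, toZModTwo (M i i) = 1 := fun i => by
    obtain ⟨k, hk⟩ := hodd i
    simp [hk, show toZModTwo 2 = 0 by decide]
  simp only [map_sum, map_mul, toZModTwo_star]
  rw [sum_sum_eq_sum_diag_of_charTwo _ _ fun i j => by rw [← hM.apply j i, toZModTwo_star]; ring]
  exact sum_congr rfl fun i _ => by rw [hdiag, mul_one, ← sq, ZMod.pow_card]

theorem even_norm_iff_dvd_sum {n : Type*} [Fintype n] {M : Matrix n n GaussianInt}
    (hM : M.IsHermitian) (hodd : ∀ j, ∃ k : ℤ, M j j = 2 * k + 1) (x : n → GaussianInt) :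
    (∃ k : ℤ, ∑ i, ∑ j, x i * M i j * star (x j) = 2 * k) ↔
      (⟨1, 1⟩ : GaussianInt) ∣ ∑ i, x i := by
  rw [exists_eq_two_mul_iff_toZModTwo_eq_zero (hM.star_sum_mul_star x),
    toZModTwo_sum_mul_star hM hodd, toZModTwo_eq_zero_iff_dvd]

def dvdSumSubmodule {R : Type*} [CommRing R] (ι : Type*) [Fintype ι] (a : R) :
    Submodule R (ι → R) where
  carrier := {x | a ∣ ∑ i, x i}
  add_mem' {x y} hx hy := by simpa [sum_add_distrib] using dvd_add hx hy
  zero_mem' := by simp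
  smul_mem' c x hx := by simpa [← mul_sum] using hx.mul_left c

theorem mem_dvdSumSubmodule {R ι : Type*} [CommRing R] [Fintype ι] {a : R} {x : ι → R} :
    x ∈ dvdSumSubmodule ι a ↔ a ∣ ∑ i, x i := Iff.rfl

theorem evenBasis_castSucc {k : ℕ} (i : Fin k) :
    evenBasis (k + 1) i.castSucc = Pi.single i.castSucc 1 - Pi.single i.succ 1 := by
  simp [evenBasis, Fin.succ]

theorem evenBasis_last (k : ℕ) :
    evenBasis (k + 1) (Fin.last k) =
      Pi.single (⟨k - 1, by omega⟩ : Fin (k + 1)) 1 + Pi.single (Fin.last k) ⟨0, 1⟩ := by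
  simp [evenBasis, Fin.last]

theorem evenBasis_mem_dvdSumSubmodule {n : ℕ} (j : Fin n) :
    evenBasis n j ∈ dvdSumSubmodule (Fin n) ⟨1, 1⟩ := by
  rw [mem_dvdSumSubmodule, evenBasis]
  split_ifs
  · simp [sum_sub_distrib]
  · simp only [Pi.add_apply, sum_add_distrib, sum_pi_single', mem_univ, if_true]
    exact ⟨1, by decide⟩

theorem single_sub_single_last_mem_span_evenBasis {k : ℕ} (i : Fin (k + 1)) :
    Pi.single i 1 - Pi.single (Fin.last k) 1 ∈
      Submodule.span GaussianInt (Set.range (evenBasis (k + 1))) := by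
  induction i using Fin.reverseInduction with
  | last => simp
  | cast i ih =>
    rw [show Pi.single i.castSucc 1 - Pi.single (Fin.last k) 1 =
        evenBasis (k + 1) i.castSucc + (Pi.single i.succ 1 - Pi.single (Fin.last k) 1) by
      rw [evenBasis_castSucc]; abel]
    exact add_mem (Submodule.subset_span ⟨_, rfl⟩) ih

theorem single_last_mem_span_evenBasis (k : ℕ) :
    Pi.single (Fin.last k) ⟨1, 1⟩ ∈ Submodule.span GaussianInt (Set.range (evenBasis (k + 1))) := by
  rw [show Pi.single (Fin.last k) ⟨1, 1⟩ = evenBasis (k + 1) (Fin.last k) -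
      (Pi.single ⟨k - 1, by omega⟩ 1 - Pi.single (Fin.last k) 1) by
    rw [evenBasis_last, show (⟨1, 1⟩ : GaussianInt) = ⟨0, 1⟩ + 1 by decide, Pi.single_add]; abel]
  exact sub_mem (Submodule.subset_span ⟨_, rfl⟩) (single_sub_single_last_mem_span_evenBasis _)

theorem eq_sum_smul_single_sub_single_add {R ι : Type*} [CommRing R] [Fintype ι] [DecidableEq ι]
    (x : ι → R) (j : ι) :
    x = ∑ i, x i • (Pi.single i 1 - Pi.single j 1) + (∑ i, x i) • Pi.single j 1 := by
  simp only [smul_sub, sum_sub_distrib, ← sum_smul, sub_add_cancel]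
  conv_lhs => rw [← univ_sum_single x]
  simp [← Pi.single_smul]

theorem span_evenBasis (n : ℕ) :
    Submodule.span GaussianInt (Set.range (evenBasis n)) = dvdSumSubmodule (Fin n) ⟨1, 1⟩ := by
  refine le_antisymm (Submodule.span_le.2 ?_) ?_
  · rintro _ ⟨j, rfl⟩
    exact evenBasis_mem_dvdSumSubmodule j
  obtain _ | k := n
  · exact fun x _ => by simp [Subsingleton.elim x 0]
  rintro x ⟨w, hw⟩
  rw [eq_sum_smul_single_sub_single_add x (Fin.last k), hw, mul_comm, mul_smul,
    ← Pi.single_smul, smul_eq_mul, mul_one]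
  exact add_mem (Submodule.sum_mem _ fun i _ => Submodule.smul_mem _ _
      (single_sub_single_last_mem_span_evenBasis i))
    (Submodule.smul_mem _ _ (single_last_mem_span_evenBasis k))

theorem linearIndependent_of_smul_single_mem_span {R ι : Type*} [CommRing R] [IsDomain R]
    [Fintype ι] [DecidableEq ι] {v : ι → ι → R} {s : R} (hs : s ≠ 0)
    (h : ∀ k, Pi.single k s ∈ Submodule.span R (Set.range v)) : LinearIndependent R v := by
  choose c hc using fun k => (Submodule.mem_span_range_iff_exists_fun R).1 (h k)
  have hmul : Matrix.of c * Matrix.of v = s • 1 := by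
    ext k l
    simpa [Matrix.mul_apply, Matrix.one_apply, Pi.single_apply, eq_comm] using congrFun (hc k) l
  have hdet : (Matrix.of c).det * (Matrix.of v).det = s ^ Fintype.card ι := by
    rw [← det_mul, hmul, det_smul, det_one, mul_one]
  exact linearIndependent_rows_of_det_ne_zero (right_ne_zero_of_mul (hdet ▸ pow_ne_zero _ hs))

theorem linearIndependent_evenBasis (n : ℕ) : LinearIndependent GaussianInt (evenBasis n) := by
  refine linearIndependent_of_smul_single_mem_span (s := ⟨1, 1⟩) (by decide) fun k => ?_
  rw [span_evenBasis, mem_dvdSumSubmodule, Finset.sum_pi_single']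
  simp

-- `M` is the Gram matrix of `H` in the basis `v`, so that `H(x) = ∑ᵢⱼ xᵢ Mᵢⱼ x̄ⱼ`.
theorem even_sublattice_basis_general (n : ℕ)
    (M : Matrix (Fin n) (Fin n) GaussianInt) (hM : M.IsHermitian)
    (hodd : ∀ j, ∃ k : ℤ, M j j = 2 * k + 1) :
    LinearIndependent GaussianInt (evenBasis n) ∧
    ((Submodule.span GaussianInt (Set.range (evenBasis n)) : Set (Fin n → GaussianInt))
      = {x : Fin n → GaussianInt |
          ∃ k : ℤ, (∑ i, ∑ j, x i * M i j * star (x j)) = 2 * k}) := by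
  refine ⟨linearIndependent_evenBasis n, ?_⟩
  ext x
  rw [SetLike.mem_coe, span_evenBasis, mem_dvdSumSubmodule]
  exact (even_norm_iff_dvd_sum hM hodd x).symm

/-- If L is a Hermitian ℤ[i]-lattice with basis v₁,…,vₙ, all of odd norm, then the set of
vectors of even norm is the sublattice with basis v₁-v₂, …, v_{n-1}-vₙ, v_{n-1}+i·vₙ.
Here the Hermitian form is given by the Gram matrix M, H(x) = ∑ᵢⱼ xᵢ Mᵢⱼ x̄ⱼ. -/
theorem even_sublattice_basis (n : ℕ) (hn : 2 ≤ n)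
    (M : Matrix (Fin n) (Fin n) GaussianInt) (hM : M.IsHermitian)
    (hodd : ∀ j, ∃ k : ℤ, M j j = 2 * k + 1) :
    LinearIndependent GaussianInt (evenBasis n) ∧
    ((Submodule.span GaussianInt (Set.range (evenBasis n)) : Set (Fin n → GaussianInt))
      = {x : Fin n → GaussianInt |
          ∃ k : ℤ, (∑ i, ∑ j, x i * M i j * star (x j)) = 2 * k}) :=
  even_sublattice_basis_general n M hM hodd
end

section
/- Over the Eisenstein integers 𝒪 = ℤ[(1+√-3)/2]: if L is a positive definite Hermitian 𝒪-lattice that represents ⟨1,1⟩ and ⟨1,2⟩, and if it is known that both ⟨1,1,1⟩ and ⟨1,1,2⟩ are 2-universal over 𝒪, then L is 2-universal. -/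
open Complex Matrix
open scoped ComplexOrder

/-- The Hermitian lattice with Gram matrix M represents the lattice with Gram matrix B
(Gram matrices of generating sets, entries in 𝒪 = ℤ[(1+√-3)/2]). -/
def Represents {d k : ℕ} (M : Matrix (Fin d) (Fin d) ℂ) (B : Matrix (Fin k) (Fin k) ℂ) :
    Prop :=
  ∃ X : Matrix (Fin k) (Fin d) ℂ, (∀ i j, X i j ∈ ringO 3) ∧ B = X * M * Xᴴ

/-- 2-universal: represents every positive definite binary Hermitian 𝒪-lattice
(formal Gram matrix of rank 2, possibly of a nonfree lattice). -/
def TwoUniversal {d : ℕ} (M : Matrix (Fin d) (Fin d) ℂ) : Prop :=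
  ∀ (k : ℕ) (B : Matrix (Fin k) (Fin k) ℂ),
    (∀ i j, B i j ∈ ringO 3) → B.PosSemidef → B.rank = 2 → Represents M B

/-! Let `X M Xᴴ = 1` and `Y M Yᴴ = diag(1, 2)`. As `⟨1,1⟩` is unimodular, `Z = Y - C X` with
`C = Y M Xᴴ` is orthogonal to `X` and has Gram matrix `G = diag(1, 2) - C Cᴴ`, which is positive
semidefinite. The diagonal of `C Cᴴ` consists of sums of norms from `𝒪`, so `G₀₀ ∈ {0, 1}` and
`G₁₁ ∈ {0, 1, 2}`. If neither is `1` or `2`, then `G` has trace `0`, so `G = 0` and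
`|det C|² = 2`, impossible since `x² + xy + y² ≠ 2`. Hence a row of `Z` of norm `c ∈ {1, 2}`
extends `X` to a copy of `⟨1, 1, c⟩` in `L`, which is `2`-universal. -/

lemma omg_three : omg 3 = (1 + Real.sqrt 3 * I) / 2 := by simp [omg]

lemma omg_three_sq : omg 3 ^ 2 = omg 3 - 1 := by
  have h3 : (Real.sqrt 3 : ℂ) ^ 2 = 3 := by
    rw [← ofReal_pow, Real.sq_sqrt (by norm_num)]; norm_num
  rw [omg_three]
  linear_combination I ^ 2 / 4 * h3 + 3 / 4 * I_sq

lemma star_omg_three : star (omg 3) = 1 - omg 3 := by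
  rw [omg_three]
  apply Complex.ext <;> simp <;> ring

lemma mem_ringO_three_iff {a : ℂ} : a ∈ ringO 3 ↔ ∃ x y : ℤ, a = x + y * omg 3 := by
  constructor
  · intro ha
    induction ha using Algebra.adjoin_induction with
    | mem z hz => exact ⟨0, 1, by simp [Set.mem_singleton_iff.mp hz]⟩
    | algebraMap r => exact ⟨r, 0, by simp⟩
    | add u v _ _ ihu ihv =>
      obtain ⟨x₁, y₁, rfl⟩ := ihu
      obtain ⟨x₂, y₂, rfl⟩ := ihv
      exact ⟨x₁ + x₂, y₁ + y₂, by push_cast; ring⟩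
    | mul u v _ _ ihu ihv =>
      obtain ⟨x₁, y₁, rfl⟩ := ihu
      obtain ⟨x₂, y₂, rfl⟩ := ihv
      refine ⟨x₁ * x₂ - y₁ * y₂, x₁ * y₂ + y₁ * x₂ + y₁ * y₂, ?_⟩
      push_cast
      linear_combination (y₁ : ℂ) * y₂ * omg_three_sq
  · rintro ⟨x, y, rfl⟩
    exact add_mem (intCast_mem _ x) (mul_mem (intCast_mem _ y) (Algebra.subset_adjoin rfl))

lemma star_mem_ringO_three {a : ℂ} (ha : a ∈ ringO 3) : star a ∈ ringO 3 := by
  obtain ⟨x, y, rfl⟩ := mem_ringO_three_iff.mp ha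
  refine mem_ringO_three_iff.mpr ⟨x + y, -y, ?_⟩
  simp only [star_add, star_mul', star_omg_three, star_intCast]
  push_cast
  ring

lemma mul_star_eq_of_mem_ringO_three {a : ℂ} (ha : a ∈ ringO 3) :
    ∃ x y : ℤ, a * star a = ((x ^ 2 + x * y + y ^ 2 : ℤ) : ℂ) := by
  obtain ⟨x, y, rfl⟩ := mem_ringO_three_iff.mp ha
  refine ⟨x, y, ?_⟩
  simp only [star_add, star_mul', star_omg_three, star_intCast]
  push_cast
  linear_combination -(y : ℂ) ^ 2 * omg_three_sq

lemma sq_add_mul_add_sq_ne_two (x y : ℤ) : x ^ 2 + x * y + y ^ 2 ≠ 2 := by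
  have hmod : ∀ a b : ZMod 3, a ^ 2 + a * b + b ^ 2 ≠ 2 := by decide
  intro h
  exact hmod x y (by exact_mod_cast congrArg (Int.cast : ℤ → ZMod 3) h)

lemma exists_mul_star_eq_natCast {a : ℂ} (ha : a ∈ ringO 3) : ∃ n : ℕ, a * star a = n := by
  obtain ⟨x, y, h⟩ := mul_star_eq_of_mem_ringO_three ha
  refine ⟨(x ^ 2 + x * y + y ^ 2).toNat, ?_⟩
  rw [h, ← Int.cast_natCast, Int.toNat_of_nonneg (by nlinarith [sq_nonneg (x + y)])]

lemma mul_star_ne_two_of_mem_ringO_three {a : ℂ} (ha : a ∈ ringO 3) : a * star a ≠ 2 := by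
  obtain ⟨x, y, h⟩ := mul_star_eq_of_mem_ringO_three ha
  rw [h]
  exact_mod_cast sq_add_mul_add_sq_ne_two x y

namespace Matrix

section Entries

variable {R S : Type*} [Semiring R] [SetLike S R] [SubsemiringClass S R] {s : S}
  {l m n : Type*} [Fintype m]

lemma mul_apply_mem {A : Matrix l m R} {B : Matrix m n R} (hA : ∀ i j, A i j ∈ s)
    (hB : ∀ i j, B i j ∈ s) (i : l) (j : n) : (A * B) i j ∈ s :=
  sum_mem fun k _ => mul_mem (hA i k) (hB k j)

end Entries

section Projection

variable {R l m n : Type*} [Ring R] [StarRing R] [Fintype n]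

lemma submatrix_mul_mul_conjTranspose_submatrix (W : Matrix m n R) (M : Matrix n n R)
    (e : l → m) : W.submatrix e id * M * (W.submatrix e id)ᴴ = (W * M * Wᴴ).submatrix e e :=
  rfl

variable [Fintype m] [DecidableEq m]

lemma sub_proj_mul_mul_conjTranspose {M : Matrix n n R} {X : Matrix m n R}
    (hX : X * M * Xᴴ = 1) (Y : Matrix l n R) :
    (Y - Y * M * Xᴴ * X) * M * Xᴴ = 0 := by
  rw [Matrix.sub_mul, Matrix.sub_mul, Matrix.mul_assoc _ X M, Matrix.mul_assoc _ (X * M), hX,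
    Matrix.mul_one, sub_self]

lemma sub_proj_mul_mul_conjTranspose_sub_proj {M : Matrix n n R} (hM : M.IsHermitian)
    {X : Matrix m n R} (hX : X * M * Xᴴ = 1) (Y : Matrix l n R) :
    (Y - Y * M * Xᴴ * X) * M * (Y - Y * M * Xᴴ * X)ᴴ =
      Y * M * Yᴴ - Y * M * Xᴴ * (Y * M * Xᴴ)ᴴ := by
  have hXY : X * M * Yᴴ = (Y * M * Xᴴ)ᴴ := by
    simp only [conjTranspose_mul, conjTranspose_conjTranspose, hM.eq, Matrix.mul_assoc]
  calc (Y - Y * M * Xᴴ * X) * M * (Y - Y * M * Xᴴ * X)ᴴ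
      = (Y - Y * M * Xᴴ * X) * M * Yᴴ - (Y - Y * M * Xᴴ * X) * M * Xᴴ * (Y * M * Xᴴ)ᴴ := by
        simp only [conjTranspose_sub, conjTranspose_mul, Matrix.mul_sub, Matrix.mul_assoc]
    _ = Y * M * Yᴴ - Y * M * Xᴴ * (Y * M * Xᴴ)ᴴ := by
        rw [sub_proj_mul_mul_conjTranspose hX, Matrix.zero_mul, sub_zero, Matrix.sub_mul,
          Matrix.sub_mul, Matrix.mul_assoc _ X M, Matrix.mul_assoc _ (X * M), hXY]

end Projection

end Matrix

lemma conjTranspose_apply_mem_ringO_three {m n : Type*} {A : Matrix m n ℂ}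
    (hA : ∀ i j, A i j ∈ ringO 3) (i : n) (j : m) : Aᴴ i j ∈ ringO 3 :=
  star_mem_ringO_three (hA j i)

lemma mul_conjTranspose_apply_self_eq_natCast {m n : Type*} [Fintype n] {C : Matrix m n ℂ}
    (hC : ∀ i j, C i j ∈ ringO 3) (i : m) : ∃ k : ℕ, (C * Cᴴ) i i = k := by
  choose k hk using fun j => exists_mul_star_eq_natCast (hC i j)
  exact ⟨∑ j, k j, by simp only [mul_apply, conjTranspose_apply, hk, Nat.cast_sum]⟩

lemma mul_conjTranspose_ne_diagonal_one_two {C : Matrix (Fin 2) (Fin 2) ℂ}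
    (hC : ∀ i j, C i j ∈ ringO 3) : C * Cᴴ ≠ diagonal ![1, 2] := by
  intro h
  have hdet : C.det ∈ ringO 3 := by
    rw [det_fin_two]
    exact sub_mem (mul_mem (hC 0 0) (hC 1 1)) (mul_mem (hC 0 1) (hC 1 0))
  apply mul_star_ne_two_of_mem_ringO_three hdet
  simpa [det_mul, det_conjTranspose, det_diagonal] using congrArg det h

lemma Complex.natCast_le_of_nonneg_sub {a b : ℕ} (h : (0 : ℂ) ≤ a - b) : b ≤ a := by
  have := (Complex.nonneg_iff.mp h).1
  simp only [sub_re, natCast_re, sub_nonneg] at this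
  exact_mod_cast this

lemma exists_apply_self_eq_one_or_two {C G : Matrix (Fin 2) (Fin 2) ℂ}
    (hC : ∀ i j, C i j ∈ ringO 3) (hGC : G = diagonal ![1, 2] - C * Cᴴ) (hG : G.PosSemidef) :
    ∃ r, G r r = 1 ∨ G r r = 2 := by
  obtain ⟨k₀, hk₀⟩ := mul_conjTranspose_apply_self_eq_natCast hC 0
  obtain ⟨k₁, hk₁⟩ := mul_conjTranspose_apply_self_eq_natCast hC 1
  have hG₀ : G 0 0 = ((1 : ℕ) : ℂ) - k₀ := by simp [hGC, hk₀]
  have hG₁ : G 1 1 = ((2 : ℕ) : ℂ) - k₁ := by simp [hGC, hk₁]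
  have hk₀_le := Complex.natCast_le_of_nonneg_sub (hG₀ ▸ hG.diag_nonneg)
  have hk₁_le := Complex.natCast_le_of_nonneg_sub (hG₁ ▸ hG.diag_nonneg)
  obtain rfl | rfl : k₀ = 0 ∨ k₀ = 1 := by omega
  · exact ⟨0, .inl (by simp [hG₀])⟩
  obtain rfl | rfl | rfl : k₁ = 0 ∨ k₁ = 1 ∨ k₁ = 2 := by omega
  · exact ⟨1, .inr (by simp [hG₁])⟩
  · exact ⟨1, .inl (by norm_num [hG₁])⟩
  have hzero : G = 0 := hG.trace_eq_zero_iff.mp (by simp [trace_fin_two, hG₀, hG₁])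
  rw [hzero, eq_comm, sub_eq_zero] at hGC
  exact absurd hGC.symm (mul_conjTranspose_ne_diagonal_one_two hC)

lemma Represents.trans {d k l : ℕ} {M : Matrix (Fin d) (Fin d) ℂ} {N : Matrix (Fin k) (Fin k) ℂ}
    {B : Matrix (Fin l) (Fin l) ℂ} (hMN : Represents M N) (hNB : Represents N B) :
    Represents M B := by
  obtain ⟨X, hX, rfl⟩ := hMN
  obtain ⟨Z, hZ, rfl⟩ := hNB
  exact ⟨Z * X, mul_apply_mem hZ hX, by simp only [conjTranspose_mul, Matrix.mul_assoc]⟩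

lemma TwoUniversal.of_represents {d k : ℕ} {M : Matrix (Fin d) (Fin d) ℂ}
    {N : Matrix (Fin k) (Fin k) ℂ} (hMN : Represents M N) (hN : TwoUniversal N) :
    TwoUniversal M :=
  fun l B hB hBpsd hBrank => hMN.trans (hN l B hB hBpsd hBrank)

lemma represents_diagonal_one_one_of_orthogonal {d : ℕ} {M : Matrix (Fin d) (Fin d) ℂ}
    (hM : M.IsHermitian) {X Y : Matrix (Fin 2) (Fin d) ℂ} (hX : ∀ i j, X i j ∈ ringO 3)
    (hY : ∀ i j, Y i j ∈ ringO 3) (hXX : X * M * Xᴴ = 1) (hYX : Y * M * Xᴴ = 0) (r : Fin 2) :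
    Represents M (diagonal ![1, 1, (Y * M * Yᴴ) r r]) := by
  have hXY : X * M * Yᴴ = 0 := by
    simpa only [conjTranspose_mul, conjTranspose_conjTranspose, hM.eq, Matrix.mul_assoc,
      conjTranspose_zero] using congrArg conjTranspose hYX
  refine ⟨(fromRows X Y).submatrix ![.inl 0, .inl 1, .inr r] id, ?_, ?_⟩
  · intro i j
    fin_cases i
    exacts [hX 0 j, hX 1 j, hY r j]
  · rw [submatrix_mul_mul_conjTranspose_submatrix,
      conjTranspose_fromRows_eq_fromCols_conjTranspose, fromRows_mul, fromRows_mul_fromCols, hXX,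
      hXY, hYX]
    ext i j
    fin_cases i <;> fin_cases j <;> simp

theorem two_universal_criterion_eisenstein
    (h111 : TwoUniversal (Matrix.diagonal ![(1 : ℂ), 1, 1]))
    (h112 : TwoUniversal (Matrix.diagonal ![(1 : ℂ), 1, 2]))
    (d : ℕ) (M : Matrix (Fin d) (Fin d) ℂ)
    (hM : ∀ i j, M i j ∈ ringO 3) (hpsd : M.PosSemidef)
    (h11 : Represents M (1 : Matrix (Fin 2) (Fin 2) ℂ))
    (h12 : Represents M (Matrix.diagonal ![(1 : ℂ), 2])) :
    TwoUniversal M := by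
  obtain ⟨X, hX, hXX⟩ := h11
  obtain ⟨Y, hY, hYY⟩ := h12
  set C := Y * M * Xᴴ
  have hC : ∀ i j, C i j ∈ ringO 3 :=
    mul_apply_mem (mul_apply_mem hY hM) (conjTranspose_apply_mem_ringO_three hX)
  set Z := Y - C * X
  have hZ : ∀ i j, Z i j ∈ ringO 3 := fun i j => sub_mem (hY i j) (mul_apply_mem hC hX i j)
  have hZZ : Z * M * Zᴴ = diagonal ![1, 2] - C * Cᴴ := by
    rw [hYY]; exact sub_proj_mul_mul_conjTranspose_sub_proj hpsd.1 hXX.symm Y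
  obtain ⟨r, hr⟩ := exists_apply_self_eq_one_or_two hC hZZ (hpsd.mul_mul_conjTranspose_same Z)
  have hrep := represents_diagonal_one_one_of_orthogonal hpsd.1 hX hZ hXX.symm
    (sub_proj_mul_mul_conjTranspose hXX.symm Y) r
  rcases hr with hr | hr
  · exact .of_represents hrep (hr ▸ h111)
  · exact .of_represents hrep (hr ▸ h112)
end

section
/- Over the ring 𝒪 = ℤ[√-2], the binary Hermitian lattice with Gram matrix [[2,-1+√-2],[-1-√-2,2]] is not represented by the quaternary lattice ⟨1,1,1,a⟩ for any positive integer a. -/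
open Complex Matrix

/-!
Pull everything back along the embedding `ℤ√-2 → ℂ`, `√-2 ↦ omg 2`. Write `x, y ∈ 𝒪⁴` for the
rows of `X`, `w = (1, 1, 1, a)` and `N` for the norm, so that `∑ wⱼ N(xⱼ) = ∑ wⱼ N(yⱼ) = 2` and
`∑ wⱼ xⱼ ȳⱼ = -1 + √-2`. The `√-2`-coordinate of the last sum is nonzero, so some term `xᵢ ȳᵢ`
has nonzero `√-2`-coordinate and hence norm `N(xᵢ) N(yᵢ) ≥ 2`. Then `N(xᵢ) ≥ 2`, say, which
forces `wᵢ N(xᵢ) = 2` and `xⱼ = 0` for `j ≠ i`. The whole sum is then the single term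
`wᵢ xᵢ ȳᵢ`, of norm `(wᵢ N(xᵢ)) (wᵢ N(yᵢ))`, which is even, whereas `N(-1 + √-2) = 3`.
-/

lemma Fintype.sum_mul_eq_single_of_le {ι : Type*} [Fintype ι] [DecidableEq ι] {w n : ι → ℤ}
    {c : ℤ} (hw : ∀ j, 0 < w j) (hn : ∀ j, 0 ≤ n j) (hsum : ∑ j, w j * n j = c) {i : ι}
    (hi : c ≤ n i) : w i * n i = c ∧ ∀ j ≠ i, n j = 0 := by
  have hterm (j : ι) : 0 ≤ w j * n j := mul_nonneg (hw j).le (hn j)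
  rw [← Finset.add_sum_erase _ _ (Finset.mem_univ i)] at hsum
  have hrest : 0 ≤ ∑ j ∈ Finset.univ.erase i, w j * n j := Finset.sum_nonneg fun j _ => hterm j
  have hwi : n i ≤ w i * n i := le_mul_of_one_le_left (hn i) (hw i)
  refine ⟨by omega, fun j hj => ?_⟩
  have hzero := (Finset.sum_eq_zero_iff_of_nonneg fun j _ => hterm j).1 (by omega) j
    (Finset.mem_erase.2 ⟨hj, Finset.mem_univ j⟩)
  exact (mul_eq_zero.1 hzero).resolve_left (hw j).ne'

lemma Matrix.mul_diagonal_mul_conjTranspose_apply {m ι R : Type*} [Fintype ι] [DecidableEq ι]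
    [CommRing R] [StarRing R] (Y : Matrix m ι R) (w : ι → R) (i k : m) :
    (Y * diagonal w * Yᴴ) i k = ∑ j, w j * (Y i j * star (Y k j)) := by
  simp only [mul_apply (M := Y * diagonal w), mul_diagonal, conjTranspose_apply]
  exact Finset.sum_congr rfl fun j _ => by ring

namespace Zsqrtd

variable {d : ℤ}

lemma im_sum {ι : Type*} (s : Finset ι) (f : ι → ℤ√d) :
    (∑ j ∈ s, f j).im = ∑ j ∈ s, (f j).im :=
  map_sum (AddMonoidHom.mk' im im_add) f s

lemma two_le_norm_of_im_ne_zero (hd : d ≤ -2) {z : ℤ√d} (hz : z.im ≠ 0) : 2 ≤ z.norm := by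
  have : 1 ≤ z.im * z.im := by nlinarith [Int.one_le_abs hz, abs_mul_abs_self z.im]
  rw [norm_def]
  nlinarith [mul_self_nonneg z.re]

variable {ι : Type*} [Fintype ι] [DecidableEq ι] {w : ι → ℤ}

lemma dvd_norm_sum_of_le_norm (hd : d < 0) (hw : ∀ j, 0 < w j) {c : ℤ} {x : ι → ℤ√d}
    (hx : ∑ j, w j * (x j).norm = c) (y : ι → ℤ√d) {i : ι} (hi : c ≤ (x i).norm) :
    c ∣ (∑ j, (w j : ℤ√d) * (x j * star (y j))).norm := by
  obtain ⟨hxi, hxj⟩ := Fintype.sum_mul_eq_single_of_le hw (fun j => norm_nonneg hd.le _) hx hi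
  rw [Fintype.sum_eq_single i fun j hj => by
    rw [(norm_eq_zero_iff hd _).1 (hxj j hj), zero_mul, mul_zero]]
  rw [norm_mul, norm_mul, norm_intCast, norm_conj]
  exact ⟨w i * (y i).norm, by rw [← hxi]; ring⟩

theorem binary_ne_mul_diagonal_mul_conjTranspose (hd : d ≤ -2) (hw : ∀ j, 0 < w j) {b : ℤ√d}
    (hb_im : b.im ≠ 0) (hb_norm : ¬ 2 ∣ b.norm) (Y : Matrix (Fin 2) ι (ℤ√d)) :
    !![2, b; star b, 2] ≠ Y * diagonal (fun j => (w j : ℤ√d)) * Yᴴ := by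
  intro hY
  have hd0 : d < 0 := by omega
  have entry (i k : Fin 2) := (congrFun (congrFun hY i) k).trans
    (mul_diagonal_mul_conjTranspose_apply _ _ i k)
  have hnorm (i : Fin 2) : ∑ j, w j * (Y i j).norm = 2 := by
    have : (2 : ℤ√d) = ∑ j, (w j : ℤ√d) * (Y i j).norm := by
      simp only [norm_eq_mul_conj]
      fin_cases i
      exacts [entry 0 0, entry 1 1]
    exact_mod_cast this.symm
  have hxy : b = ∑ j, (w j : ℤ√d) * (Y 0 j * star (Y 1 j)) := entry 0 1
  have hyx : star b = ∑ j, (w j : ℤ√d) * (Y 1 j * star (Y 0 j)) := entry 1 0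
  obtain ⟨i, hi⟩ : ∃ i, (Y 0 i * star (Y 1 i)).im ≠ 0 := by
    have him := congrArg im hxy
    simp only [im_sum, im_smul] at him
    obtain ⟨i, -, hi⟩ := Finset.exists_ne_zero_of_sum_ne_zero (him ▸ hb_im)
    exact ⟨i, right_ne_zero_of_mul hi⟩
  have hprod : 2 ≤ (Y 0 i).norm * (Y 1 i).norm := by
    simpa only [norm_mul, norm_conj] using two_le_norm_of_im_ne_zero hd hi
  by_cases h0 : 2 ≤ (Y 0 i).norm
  · have := dvd_norm_sum_of_le_norm hd0 hw (hnorm 0) (Y 1) h0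
    exact hb_norm (by rwa [← hxy] at this)
  · have h1 : 2 ≤ (Y 1 i).norm := by
      nlinarith [norm_nonneg hd0.le (Y 0 i), norm_nonneg hd0.le (Y 1 i)]
    have := dvd_norm_sum_of_le_norm hd0 hw (hnorm 1) (Y 0) h1
    exact hb_norm (by rwa [← hyx, norm_conj] at this)

end Zsqrtd

lemma omg_two_mul_self : omg 2 * omg 2 = ((-2 : ℤ) : ℂ) := by
  have h : (Real.sqrt 2 : ℂ) * Real.sqrt 2 = 2 := by
    rw [← ofReal_mul, Real.mul_self_sqrt zero_le_two, ofReal_ofNat]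
  simp only [omg, show (2 : ℕ) % 4 ≠ 3 by decide, if_false, Nat.cast_ofNat]
  linear_combination (I * I) * h + 2 * I_mul_I

lemma star_omg_two : star (omg 2) = -omg 2 := by
  simp [omg, conj_ofReal]

noncomputable def liftOmgTwo : ℤ√(-2) →+* ℂ := Zsqrtd.lift ⟨omg 2, omg_two_mul_self⟩

lemma liftOmgTwo_injective : Function.Injective liftOmgTwo :=
  Zsqrtd.lift_injective _ fun n => by nlinarith [mul_self_nonneg n]

lemma liftOmgTwo_star (z : ℤ√(-2)) : liftOmgTwo (star z) = star (liftOmgTwo z) := by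
  simp [liftOmgTwo, star_omg_two]

lemma ringO_two_le_range : ringO 2 ≤ liftOmgTwo.toIntAlgHom.range :=
  Algebra.adjoin_le <| Set.singleton_subset_iff.2 ⟨Zsqrtd.sqrtd, by simp [liftOmgTwo]⟩

lemma exists_map_liftOmgTwo_eq {m n : Type*} (X : Matrix m n ℂ) (hX : ∀ i j, X i j ∈ ringO 2) :
    ∃ Y : Matrix m n (ℤ√(-2)), Y.map liftOmgTwo = X := by
  choose Y hY using fun i j => ringO_two_le_range (hX i j)
  exact ⟨Matrix.of Y, Matrix.ext hY⟩

theorem binary_not_represented_by_111a (a : ℕ) (ha : 0 < a) :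
    ¬∃ X : Matrix (Fin 2) (Fin 4) ℂ, (∀ i j, X i j ∈ ringO 2) ∧
      !![(2 : ℂ), -1 + omg 2; -1 - omg 2, 2]
        = X * Matrix.diagonal ![(1 : ℂ), 1, 1, (a : ℂ)] * Xᴴ := by
  rintro ⟨X, hX, hM⟩
  obtain ⟨Y, rfl⟩ := exists_map_liftOmgTwo_eq X hX
  have hw : ∀ j, 0 < ![1, 1, 1, (a : ℤ)] j := by
    intro j; fin_cases j <;> simp [ha]
  refine Zsqrtd.binary_ne_mul_diagonal_mul_conjTranspose le_rfl hw (b := ⟨-1, 1⟩) one_ne_zero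
    (by decide) Y (map_injective liftOmgTwo_injective ?_)
  dsimp only
  rw [Matrix.map_mul, Matrix.map_mul, diagonal_map (map_zero _),
    conjTranspose_map _ liftOmgTwo_star]
  convert hM using 3
  · ext i j
    fin_cases i <;> fin_cases j <;> simp [liftOmgTwo, Zsqrtd.star_mk, sub_eq_add_neg]
  · congr 1
    ext j
    fin_cases j <;> simp
end
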